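/- arXiv:1603.09009 — 10 statements merged into one kernel-verified Lean document; each statement's English description precedes it below -/
import Mathlib

section
/- Let l ≤ r be reals and C ⊆ ℝ^m a convex set such that for every subset S of {1,...,m} there exists x ∈ C with x_i ≥ l for all i ∈ S and x_i ≤ r for all i ∉ S. Then there exists a point x ∈ C with all coordinates in [l, r]. -/
/-!
Call a pair of index sets `(S, T)` feasible when some point of `C` is `≥ l` on `S` and `≤ r`
on `T`. The hypothesis says `(S, Sᶜ)` is feasible for every `S`; we enlarge the overlap `S ∩ T`
one index `j` at a time. If `(S ∪ {j}, T)` and `(S, T ∪ {j})` are feasible with witnesses `x`,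
`y`, then `x j ≥ l` and `y j ≤ r`, so the `j`-th coordinate takes a value in `[l, r]` somewhere
on the segment `[x, y]`, which by convexity stays in `C` and keeps the bounds on `S` and `T`.
Once the overlap is everything, the witness lies in the box `[l, r]^m`.
-/

open Set

theorem Convex.exists_apply_mem_Icc {E : Type*} [AddCommGroup E] [Module ℝ E] {D : Set E}
    (hD : Convex ℝ D) (f : E →ₗ[ℝ] ℝ) {l r : ℝ} (hlr : l ≤ r) {x y : E} (hx : x ∈ D)
    (hy : y ∈ D) (hlx : l ≤ f x) (hyr : f y ≤ r) : ∃ z ∈ D, f z ∈ Icc l r := by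
  have hconn : (f '' D).OrdConnected := convex_iff_ordConnected.mp (hD.linear_image f)
  have hc : max (min (f x) (f y)) l ∈ uIcc (f x) (f y) := by
    rw [mem_uIcc]
    rcases le_total (f x) (f y) with h | h
    · left; constructor <;> simp [h, hlx]
    · right; constructor <;> simp [h, hlx]
  obtain ⟨z, hzD, hz⟩ := hconn.uIcc_subset (mem_image_of_mem f hx) (mem_image_of_mem f hy) hc
  refine ⟨z, hzD, ?_⟩
  rw [hz]
  exact ⟨le_max_right _ _, max_le ((min_le_right _ _).trans hyr) hlr⟩

section BoundedPoint

variable {ι : Type*} [DecidableEq ι]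

def ExistsBoundedPoint (C : Set (ι → ℝ)) (l r : ℝ) (S T : Finset ι) : Prop :=
  ∃ x ∈ C, (∀ i ∈ S, l ≤ x i) ∧ ∀ i ∈ T, x i ≤ r

theorem ExistsBoundedPoint.insert_insert {C : Set (ι → ℝ)} (hC : Convex ℝ C) {l r : ℝ}
    (hlr : l ≤ r) {S T : Finset ι} {j : ι} (hx : ExistsBoundedPoint C l r (insert j S) T)
    (hy : ExistsBoundedPoint C l r S (insert j T)) :
    ExistsBoundedPoint C l r (insert j S) (insert j T) := by
  obtain ⟨x, hxC, hxl, hxr⟩ := hx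
  obtain ⟨y, hyC, hyl, hyr⟩ := hy
  rw [Finset.forall_mem_insert] at hxl hyr
  let D : Set (ι → ℝ) := C ∩ (S : Set ι).pi (fun _ => Ici l) ∩ (T : Set ι).pi (fun _ => Iic r)
  have hD : Convex ℝ D :=
    (hC.inter (convex_pi fun _ _ => convex_Ici l)).inter (convex_pi fun _ _ => convex_Iic r)
  obtain ⟨z, ⟨⟨hzC, hzl⟩, hzr⟩, hzj⟩ := hD.exists_apply_mem_Icc (LinearMap.proj j) hlr
    ⟨⟨hxC, hxl.2⟩, hxr⟩ ⟨⟨hyC, hyl⟩, hyr.2⟩ hxl.1 hyr.1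
  exact ⟨z, hzC, Finset.forall_mem_insert _ _ _ |>.mpr ⟨hzj.1, hzl⟩,
    Finset.forall_mem_insert _ _ _ |>.mpr ⟨hzj.2, hzr⟩⟩

theorem ExistsBoundedPoint.union_union_compl [Fintype ι] {C : Set (ι → ℝ)} (hC : Convex ℝ C)
    {l r : ℝ} (hlr : l ≤ r) (h : ∀ S, ExistsBoundedPoint C l r S Sᶜ) (A S : Finset ι) :
    ExistsBoundedPoint C l r (A ∪ S) (A ∪ Sᶜ) := by
  induction A using Finset.induction_on generalizing S with
  | empty => simpa using h S
  | insert j A _ ih =>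
    have hx := ih (insert j S)
    have hy := ih (S.erase j)
    rw [Finset.compl_insert] at hx
    rw [Finset.compl_erase] at hy
    have key := ExistsBoundedPoint.insert_insert hC hlr (S := A ∪ S.erase j)
      (T := A ∪ Sᶜ.erase j) (j := j)
      (by convert hx using 2; ext i; by_cases i = j <;> simp_all)
      (by convert hy using 2; ext i; by_cases i = j <;> simp_all)
    convert key using 2 <;> ext i <;> by_cases i = j <;> simp_all

end BoundedPoint

/-- Let `l ≤ r` be reals and `C ⊆ ℝ^m` a convex set such that for every subset `S` of the
index set there exists `x ∈ C` with `x i ≥ l` for `i ∈ S` and `x i ≤ r` for `i ∉ S`.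
Then there exists a point of `C` with all coordinates in `[l, r]`. -/
theorem stmt0 {m : ℕ} (l r : ℝ) (hlr : l ≤ r) (C : Set (Fin m → ℝ)) (hC : Convex ℝ C)
    (h : ∀ S : Finset (Fin m), ∃ x ∈ C, (∀ i ∈ S, l ≤ x i) ∧ (∀ i ∉ S, x i ≤ r)) :
    ∃ x ∈ C, ∀ i, x i ∈ Set.Icc l r := by
  have hcompl : ∀ S, ExistsBoundedPoint C l r S Sᶜ := fun S => by
    simpa [ExistsBoundedPoint] using h S
  obtain ⟨x, hxC, hxl, hxr⟩ :=
    ExistsBoundedPoint.union_union_compl hC hlr hcompl Finset.univ ∅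
  exact ⟨x, hxC, fun i => ⟨hxl i (by simp), hxr i (by simp)⟩⟩
end

section
/- If a demand vector d can be routed in a strongly connected directed graph G with congestion c, then −d can be routed in G with congestion at most bal(G)·c. -/
open Finset

variable {V : Type*} [Fintype V] [DecidableEq V]

/-- Total weight of edges from `S` to its complement. -/
def cutWeight (w : V → V → ℝ) (S : Finset V) : ℝ :=
  ∑ u ∈ S, ∑ v ∈ Sᶜ, w u v

/-- `G` is strongly connected: every vertex reaches every other along edges of
positive weight. -/
def StronglyConnected (w : V → V → ℝ) : Prop :=
  ∀ u v : V, Relation.ReflTransGen (fun a b => 0 < w a b) u v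

/-- The demand vector `b` can be routed with congestion `c`: there is a nonnegative
flow `f` supported on the edges with `f ≤ c·w` entrywise, whose net divergence
(inflow minus outflow) at each vertex is `b`. -/
def Routes (w : V → V → ℝ) (b : V → ℝ) (c : ℝ) : Prop :=
  ∃ f : V → V → ℝ, (∀ u v, 0 ≤ f u v) ∧ (∀ u v, f u v ≤ c * w u v) ∧
    ∀ x : V, (∑ u, f u x) - (∑ u, f x u) = b x

/-- The imbalance `bal(G)`: the least nonnegative `α` such that for every cut `S`,
`w(S, V∖S) ≤ α · w(V∖S, S)`. -/
noncomputable def bal (w : V → V → ℝ) : ℝ :=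
  sInf {α : ℝ | 0 ≤ α ∧ ∀ S : Finset V, cutWeight w S ≤ α * cutWeight w Sᶜ}

/-!
Routing `-d` with capacities `bal w * c * w` is a feasibility problem, and Gale's theorem reduces
it to the cut condition `∑ v ∈ S, d v ≤ bal w * c * w(S, Sᶜ)` for every `S`. The flow routing `d`
brings `∑ v ∈ S, d v` into `S` over edges of total capacity `c * w(Sᶜ, S)`, which is at most
`c * bal w * w(S, Sᶜ)`; strong connectivity is what makes the infimum defining `bal` attained.

Gale's theorem is proved by minimizing the squared excess `∑ v, (netInflow g v - b v) ^ 2` over the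
box of capacity-respecting flows. At a minimizer, pushing a little flow along a residual edge cannot
help, so the excess does not decrease along residual edges. Hence every edge leaving the set of
vertices of positive excess is saturated and every edge entering it is empty; the cut condition then
forces that set to be empty, and since the excesses sum to zero they all vanish.
-/

def netInflow {α : Type*} [Fintype α] (g : α → α → ℝ) (v : α) : ℝ :=
  ∑ u, g u v - ∑ u, g v u

section
variable {α : Type*} [Fintype α]

theorem sum_netInflow_eq_zero (g : α → α → ℝ) : ∑ v, netInflow g v = 0 := by
  simp only [netInflow, sum_sub_distrib]
  rw [sum_comm, sub_self]

theorem Routes.sum_eq_zero {w : α → α → ℝ} {d : α → ℝ} {c : ℝ}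
    (h : Routes w d c) : ∑ v, d v = 0 := by
  obtain ⟨f, -, -, hf⟩ := h
  rw [← sum_netInflow_eq_zero f]
  exact sum_congr rfl fun v _ => (hf v).symm

@[fun_prop]
theorem continuous_netInflow (v : α) : Continuous fun g : α → α → ℝ => netInflow g v := by
  unfold netInflow
  fun_prop

theorem netInflow_add_single [DecidableEq α] (g : α → α → ℝ) (p q : α) (ε : ℝ) :
    netInflow (g + Pi.single p (Pi.single q ε))
      = netInflow g + Pi.single q ε - Pi.single p ε := by
  ext v
  simp only [netInflow, Pi.add_apply, Pi.sub_apply, sum_add_distrib]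
  simp only [Pi.single_apply, ite_apply, Pi.zero_apply, sum_ite_eq', mem_univ, ↓reduceIte,
    sum_ite_irrel, sum_const_zero]
  ring

theorem sum_sq_add_single_sub_single [DecidableEq α] (e : α → ℝ) {p q : α} (hpq : p ≠ q)
    (ε : ℝ) :
    ∑ v, (e + Pi.single q ε - Pi.single p ε : α → ℝ) v ^ 2
      = ∑ v, e v ^ 2 + 2 * ε * (e q - e p) + 2 * ε ^ 2 := by
  have key : ∀ v, (e + Pi.single q ε - Pi.single p ε : α → ℝ) v ^ 2
      = e v ^ 2 + (Pi.single q (ε * (2 * e q + ε)) : α → ℝ) v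
        - (Pi.single p (ε * (2 * e p - ε)) : α → ℝ) v := by
    intro v
    by_cases hq : v = q <;> by_cases hp : v = p <;> simp_all <;> ring
  simp only [key, sum_add_distrib, sum_sub_distrib, sum_pi_single', mem_univ, if_true]
  ring
end

theorem nonneg_of_forall_mul_add_sq_nonneg {x η : ℝ} (hη : 0 < η)
    (h : ∀ ε, 0 < ε → ε ≤ η → 0 ≤ ε * x + ε ^ 2) : 0 ≤ x := by
  by_contra! hx
  have := h (min η (-x / 2)) (lt_min hη (by linarith)) (min_le_left _ _)
  nlinarith [min_le_right η (-x / 2), lt_min hη (by linarith : 0 < -x / 2)]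

theorem add_single_single_mem_Icc {α : Type*} [DecidableEq α] {g cap : α → α → ℝ}
    (hg : g ∈ Set.Icc 0 cap) {p q : α} {ε : ℝ} (h0 : 0 ≤ g p q + ε) (hcap : g p q + ε ≤ cap p q) :
    g + Pi.single p (Pi.single q ε) ∈ Set.Icc 0 cap := by
  have off : ∀ a c, ¬(a = p ∧ c = q) →
      (g + Pi.single p (Pi.single q ε) : α → α → ℝ) a c = g a c := by
    intro a c h
    by_cases ha : a = p
    · subst ha
      simp [show c ≠ q from fun hc => h ⟨rfl, hc⟩]
    · simp [ha]
  refine ⟨fun a c => ?_, fun a c => ?_⟩ <;> by_cases h : a = p ∧ c = q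
  · obtain ⟨rfl, rfl⟩ := h
    simpa using h0
  · rw [off a c h]
    exact hg.1 a c
  · obtain ⟨rfl, rfl⟩ := h
    simpa using hcap
  · rw [off a c h]
    exact hg.2 a c

theorem exists_flow_excess_le_along_residual {α : Type*} [Fintype α] [DecidableEq α]
    (cap : α → α → ℝ) (hcap : 0 ≤ cap) (b : α → ℝ) :
    ∃ g ∈ Set.Icc 0 cap, ∀ p q,
      (g p q < cap p q → netInflow g p - b p ≤ netInflow g q - b q) ∧
      (0 < g p q → netInflow g q - b q ≤ netInflow g p - b p) := by
  have hcont : Continuous fun g : α → α → ℝ => ∑ v, (netInflow g v - b v) ^ 2 := by fun_prop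
  obtain ⟨g, hg, hmin⟩ :=
    isCompact_Icc.exists_isMinOn (Set.nonempty_Icc.2 hcap) hcont.continuousOn
  have hg0 : ∀ p q, 0 ≤ g p q := hg.1
  have hgcap : ∀ p q, g p q ≤ cap p q := hg.2
  set e := netInflow g - b with he
  have push : ∀ p q, p ≠ q → ∀ ε, 0 ≤ g p q + ε → g p q + ε ≤ cap p q →
      0 ≤ ε * (e q - e p) + ε ^ 2 := by
    intro p q hpq ε h0 hc
    have hle : ∑ v, e v ^ 2 ≤ ∑ v, (e + Pi.single q ε - Pi.single p ε : α → ℝ) v ^ 2 := by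
      refine (hmin (add_single_single_mem_Icc hg h0 hc) : _ ≤ _).trans_eq
        (sum_congr rfl fun v _ => ?_)
      simp only [netInflow_add_single, he, Pi.add_apply, Pi.sub_apply]
      ring
    linarith [sum_sq_add_single_sub_single e hpq ε]
  refine ⟨g, hg, fun p q => ⟨fun hlt => ?_, fun hpos => ?_⟩⟩
  · rcases eq_or_ne p q with rfl | hpq
    · rfl
    · have := nonneg_of_forall_mul_add_sq_nonneg (sub_pos.2 hlt) fun ε hε hεη =>
        push p q hpq ε (by linarith [hg0 p q]) (by linarith)
      simpa [he, sub_nonneg] using this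
  · rcases eq_or_ne p q with rfl | hpq
    · rfl
    · have := nonneg_of_forall_mul_add_sq_nonneg (x := e p - e q) hpos fun ε hε hεη => by
        have := push p q hpq (-ε) (by linarith) (by linarith [hgcap p q])
        linarith
      simpa [he, sub_nonneg] using this

theorem cutWeight_nonneg {w : V → V → ℝ} (hw : ∀ u v, 0 ≤ w u v) (S : Finset V) :
    0 ≤ cutWeight w S :=
  sum_nonneg fun u _ => sum_nonneg fun v _ => hw u v

theorem cutWeight_mono {f g : V → V → ℝ} (h : ∀ u v, f u v ≤ g u v) (S : Finset V) :
    cutWeight f S ≤ cutWeight g S :=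
  sum_le_sum fun u _ => sum_le_sum fun v _ => h u v

theorem cutWeight_const_mul (c : ℝ) (w : V → V → ℝ) (S : Finset V) :
    cutWeight (fun u v => c * w u v) S = c * cutWeight w S := by
  simp only [cutWeight, mul_sum]

theorem sum_netInflow_eq_cutWeight_compl_sub (g : V → V → ℝ) (S : Finset V) :
    ∑ v ∈ S, netInflow g v = cutWeight g Sᶜ - cutWeight g S := by
  have split : ∀ v, netInflow g v = (∑ u ∈ S, g u v - ∑ u ∈ S, g v u)
      + (∑ u ∈ Sᶜ, g u v - ∑ u ∈ Sᶜ, g v u) := by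
    intro v
    rw [netInflow, ← sum_add_sum_compl S, ← sum_add_sum_compl S (g v)]
    ring
  simp only [split, sum_add_distrib, sum_sub_distrib, cutWeight, compl_compl]
  rw [sum_comm (s := S) (t := S), sum_comm (s := S) (t := Sᶜ)]
  ring

theorem Routes.sum_le_mul_cutWeight_compl {w : V → V → ℝ} {d : V → ℝ} {c : ℝ}
    (h : Routes w d c) (S : Finset V) : ∑ v ∈ S, d v ≤ c * cutWeight w Sᶜ := by
  obtain ⟨f, hf0, hfc, hf⟩ := h
  calc ∑ v ∈ S, d v = cutWeight f Sᶜ - cutWeight f S := by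
        rw [← sum_netInflow_eq_cutWeight_compl_sub]
        exact sum_congr rfl fun v _ => (hf v).symm
    _ ≤ cutWeight f Sᶜ := sub_le_self _ (cutWeight_nonneg hf0 S)
    _ ≤ c * cutWeight w Sᶜ := (cutWeight_mono hfc Sᶜ).trans_eq (cutWeight_const_mul c w Sᶜ)

/-- The sufficiency half of Gale's feasibility theorem. -/
theorem routes_of_forall_neg_sum_le_mul_cutWeight {w : V → V → ℝ} {b : V → ℝ} {c : ℝ}
    (hcap : ∀ u v, 0 ≤ c * w u v) (hb : ∑ v, b v = 0)
    (hcut : ∀ S : Finset V, -∑ v ∈ S, b v ≤ c * cutWeight w S) : Routes w b c := by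
  obtain ⟨g, ⟨hg0, hgc⟩, hopt⟩ := exists_flow_excess_le_along_residual (fun u v => c * w u v) hcap b
  set e := fun v => netInflow g v - b v with he
  set A := univ.filter fun v => 0 < e v
  have hmemA : ∀ v, v ∈ A ↔ 0 < e v := by simp [A]
  have hsat : ∀ p ∈ A, ∀ q ∈ Aᶜ, g p q = c * w p q := by
    intro p hp q hq
    by_contra hne
    have := (hopt p q).1 (lt_of_le_of_ne (hgc p q) hne)
    rw [mem_compl, hmemA] at hq
    linarith [(hmemA p).1 hp]
  have hzero : ∀ p ∈ A, ∀ q ∈ Aᶜ, g q p = 0 := by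
    intro p hp q hq
    by_contra hne
    have := (hopt q p).2 (lt_of_le_of_ne (hg0 q p) (Ne.symm hne))
    rw [mem_compl, hmemA] at hq
    linarith [(hmemA p).1 hp]
  have hsumA : ∑ v ∈ A, e v ≤ 0 := by
    have hin : cutWeight g Aᶜ = 0 := by
      rw [cutWeight, compl_compl]
      exact sum_eq_zero fun q hq => sum_eq_zero fun p hp => hzero p hp q hq
    have hout : cutWeight g A = c * cutWeight w A := by
      rw [← cutWeight_const_mul]
      exact sum_congr rfl fun p hp => sum_congr rfl fun q hq => hsat p hp q hq
    simp only [he, sum_sub_distrib, sum_netInflow_eq_cutWeight_compl_sub, hin, hout]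
    linarith [hcut A]
  have hnonpos : ∀ v, e v ≤ 0 := by
    by_contra! ⟨v, hv⟩
    have := sum_pos (fun i hi => (hmemA i).1 hi) ⟨v, (hmemA v).2 hv⟩
    linarith
  have htotal : ∑ v, e v = 0 := by
    simp only [he, sum_sub_distrib, sum_netInflow_eq_zero, hb, sub_zero]
  refine ⟨g, hg0, hgc, fun x => ?_⟩
  have := (sum_eq_zero_iff_of_nonpos fun v _ => hnonpos v).1 htotal x (mem_univ x)
  exact sub_eq_zero.1 this

theorem Relation.ReflTransGen.exists_rel_notMem_mem {α : Type*} {r : α → α → Prop}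
    {s : Set α} {a b : α} (h : Relation.ReflTransGen r a b) (ha : a ∉ s) (hb : b ∈ s) :
    ∃ x ∉ s, ∃ y ∈ s, r x y := by
  induction h with
  | refl => exact absurd hb ha
  | @tail y z _ hyz ih =>
    by_cases hy : y ∈ s
    · exact ih hy
    · exact ⟨y, hy, z, hb, hyz⟩

theorem bal_nonneg (w : V → V → ℝ) : 0 ≤ bal w :=
  Real.sInf_nonneg fun _ h => h.1

theorem StronglyConnected.cutWeight_eq_zero_of_compl {w : V → V → ℝ} (hw : ∀ u v, 0 ≤ w u v)
    (hsc : StronglyConnected w) {S : Finset V} (h : cutWeight w Sᶜ = 0) : cutWeight w S = 0 := by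
  by_contra hS
  obtain ⟨u, hu, hu'⟩ := exists_ne_zero_of_sum_ne_zero hS
  obtain ⟨v, hv, -⟩ := exists_ne_zero_of_sum_ne_zero hu'
  obtain ⟨x, hx, y, hy, hxy⟩ :=
    (hsc v u).exists_rel_notMem_mem (s := (S : Set V)) (by simpa using hv) (by simpa using hu)
  have : w x y ≤ cutWeight w Sᶜ := by
    rw [cutWeight, compl_compl]
    refine (single_le_sum (f := w x) (fun _ _ => hw x _) (by simpa using hy)).trans ?_
    exact single_le_sum (f := fun a => ∑ b ∈ S, w a b) (fun a _ => sum_nonneg fun b _ => hw a b)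
      (mem_compl.2 (by simpa using hx))
  linarith

theorem StronglyConnected.exists_cutWeight_le_mul_compl {w : V → V → ℝ}
    (hw : ∀ u v, 0 ≤ w u v) (hsc : StronglyConnected w) :
    ∃ α : ℝ, 0 ≤ α ∧ ∀ S : Finset V, cutWeight w S ≤ α * cutWeight w Sᶜ := by
  have hratio : ∀ T : Finset V, 0 ≤ cutWeight w T / cutWeight w Tᶜ := fun T =>
    div_nonneg (cutWeight_nonneg hw T) (cutWeight_nonneg hw Tᶜ)
  refine ⟨∑ T, cutWeight w T / cutWeight w Tᶜ, sum_nonneg fun T _ => hratio T, fun S => ?_⟩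
  rcases (cutWeight_nonneg hw Sᶜ).eq_or_lt with h0 | hpos
  · rw [← h0, mul_zero, hsc.cutWeight_eq_zero_of_compl hw h0.symm]
  · rw [← div_le_iff₀ hpos]
    exact single_le_sum (fun T _ => hratio T) (mem_univ S)

theorem StronglyConnected.cutWeight_compl_le_bal_mul {w : V → V → ℝ} (hw : ∀ u v, 0 ≤ w u v)
    (hsc : StronglyConnected w) (S : Finset V) : cutWeight w Sᶜ ≤ bal w * cutWeight w S := by
  rcases (cutWeight_nonneg hw S).eq_or_lt with h0 | hpos
  · rw [← h0, mul_zero, hsc.cutWeight_eq_zero_of_compl hw (S := Sᶜ) (by rw [compl_compl, ← h0])]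
  · rw [← div_le_iff₀ hpos]
    refine le_csInf (hsc.exists_cutWeight_le_mul_compl hw) fun α hα => ?_
    rw [div_le_iff₀ hpos]
    simpa using hα.2 Sᶜ

/-- If a demand vector `d` can be routed in a strongly connected directed graph `G`
with congestion `c`, then `−d` can be routed in `G` with congestion at most
`bal(G) · c`. -/
theorem stmt1 (w : V → V → ℝ) (hw : ∀ u v, 0 ≤ w u v) (hsc : StronglyConnected w)
    (d : V → ℝ) (c : ℝ) (hc : 0 ≤ c) (h : Routes w d c) :
    Routes w (fun v => -d v) (bal w * c) := by
  refine routes_of_forall_neg_sum_le_mul_cutWeight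
    (fun u v => mul_nonneg (mul_nonneg (bal_nonneg w) hc) (hw u v))
    (by simp [h.sum_eq_zero]) fun S => ?_
  simp only [sum_neg_distrib, neg_neg]
  calc ∑ v ∈ S, d v ≤ c * cutWeight w Sᶜ := h.sum_le_mul_cutWeight_compl S
    _ ≤ c * (bal w * cutWeight w S) := by gcongr; exact hsc.cutWeight_compl_le_bal_mul hw S
    _ = bal w * c * cutWeight w S := by ring
end

section
/- A strongly connected directed graph G satisfies bal(G) = 1 if and only if G is Eulerian, i.e., for every vertex the total weight of incoming edges equals the total weight of outgoing edges. -/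
/-!
The net flow `w(S, V∖S) - w(V∖S, S)` out of a cut is the sum over `S` of the vertex imbalances
`out(v) - in(v)`. Hence `α = 1` bounds every cut ratio exactly when every cut is balanced, i.e. when
`G` is Eulerian; and since `bal(G)` bounds the ratio of every cut, `bal(G) = 1` forces this.
Conversely no bound below `1` is possible: in a strongly connected graph both sides of a proper cut
are positive, so `w(S, V∖S) ≤ α · w(V∖S, S) ≤ α² · w(S, V∖S)` gives `α ≥ 1`.
-/

open Finset

variable {V : Type*} [Fintype V] [DecidableEq V]

/-- `G` is Eulerian: at each vertex, the total weight of incoming edges equals the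
total weight of outgoing edges. -/
def IsEulerian (w : V → V → ℝ) : Prop :=
  ∀ v : V, (∑ u, w u v) = ∑ u, w v u

theorem Relation.ReflTransGen.exists_rel_mem_not_mem {α : Type*} {r : α → α → Prop}
    {s : Set α} {a b : α} (h : Relation.ReflTransGen r a b) (ha : a ∈ s) (hb : b ∉ s) :
    ∃ x ∈ s, ∃ y ∉ s, r x y := by
  induction h with
  | refl => exact absurd ha hb
  | @tail c d _ hcd ih =>
    by_cases hc : c ∈ s
    · exact ⟨c, hc, d, hb, hcd⟩
    · exact ih hc

theorem cutWeight_sub_cutWeight_compl (w : V → V → ℝ) (S : Finset V) :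
    cutWeight w S - cutWeight w Sᶜ = ∑ v ∈ S, ((∑ u, w v u) - ∑ u, w u v) := by
  simp_rw [← sum_add_sum_compl S, sum_sub_distrib, sum_add_distrib]
  rw [cutWeight, cutWeight, compl_compl, sum_comm (s := Sᶜ), sum_comm (s := S) (t := S)]
  ring

theorem isEulerian_iff_forall_cutWeight_eq (w : V → V → ℝ) :
    IsEulerian w ↔ ∀ S : Finset V, cutWeight w S = cutWeight w Sᶜ := by
  refine ⟨fun h S => sub_eq_zero.mp ?_, fun h v => ?_⟩
  · rw [cutWeight_sub_cutWeight_compl]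
    exact sum_eq_zero fun v _ => by rw [h v, sub_self]
  · have hv := cutWeight_sub_cutWeight_compl w {v}
    rw [h {v}, sub_self, sum_singleton] at hv
    linarith

theorem StronglyConnected.cutWeight_pos {w : V → V → ℝ} (hsc : StronglyConnected w)
    (hw : ∀ u v, 0 ≤ w u v) {S : Finset V} (hS : S.Nonempty) (hSc : Sᶜ.Nonempty) :
    0 < cutWeight w S := by
  obtain ⟨u, hu⟩ := hS
  obtain ⟨v, hv⟩ := hSc
  obtain ⟨a, ha, b, hb, hab⟩ :=
    (hsc u v).exists_rel_mem_not_mem (s := (S : Set V)) hu (mem_compl.mp hv)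
  exact sum_pos' (fun x _ => sum_nonneg fun y _ => hw x y)
    ⟨a, ha, sum_pos' (fun y _ => hw a y) ⟨b, mem_compl.mpr hb, hab⟩⟩

def IsCutRatioBound (w : V → V → ℝ) (α : ℝ) : Prop :=
  0 ≤ α ∧ ∀ S : Finset V, cutWeight w S ≤ α * cutWeight w Sᶜ

theorem bal_eq_sInf (w : V → V → ℝ) : bal w = sInf {α | IsCutRatioBound w α} := rfl

theorem bal_le {w : V → V → ℝ} {α : ℝ} (h : IsCutRatioBound w α) : bal w ≤ α :=
  csInf_le ⟨0, fun _ hβ => hβ.1⟩ h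

theorem isClosed_setOf_isCutRatioBound (w : V → V → ℝ) :
    IsClosed {α | IsCutRatioBound w α} := by
  simp only [IsCutRatioBound, Set.ofPred_and, Set.ofPred_forall]
  exact (isClosed_le continuous_const continuous_id).inter
    (isClosed_iInter fun S => isClosed_le continuous_const (continuous_mul_const _))

/-- `bal w ≠ 0` rules out the junk value `sInf ∅ = 0`; otherwise the closed set of bounds
contains its infimum. -/
theorem isCutRatioBound_bal {w : V → V → ℝ} (h : bal w ≠ 0) : IsCutRatioBound w (bal w) := by
  have hne : {α | IsCutRatioBound w α}.Nonempty := by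
    by_contra hempty
    rw [Set.not_nonempty_iff_eq_empty] at hempty
    exact h (by rw [bal_eq_sInf, hempty, Real.sInf_empty])
  exact (isClosed_setOf_isCutRatioBound w).csInf_mem hne ⟨0, fun _ hα => hα.1⟩

theorem isCutRatioBound_one_iff (w : V → V → ℝ) : IsCutRatioBound w 1 ↔ IsEulerian w := by
  simp only [IsCutRatioBound, zero_le_one, one_mul, true_and, isEulerian_iff_forall_cutWeight_eq]
  refine ⟨fun h S => le_antisymm (h S) ?_, fun h S => (h S).le⟩
  simpa only [compl_compl] using h Sᶜ

theorem IsCutRatioBound.one_le [Nontrivial V] {w : V → V → ℝ} {α : ℝ} (h : IsCutRatioBound w α)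
    (hw : ∀ u v, 0 ≤ w u v) (hsc : StronglyConnected w) : 1 ≤ α := by
  obtain ⟨a, b, hab⟩ := exists_pair_ne V
  have hS : 0 < cutWeight w {a} := hsc.cutWeight_pos hw (singleton_nonempty a)
    ⟨b, by simpa [eq_comm] using hab⟩
  have hSc : 0 < cutWeight w {a}ᶜ := hsc.cutWeight_pos hw ⟨b, by simpa [eq_comm] using hab⟩
    (by simp)
  have h₁ := h.2 {a}
  have h₂ := h.2 {a}ᶜ
  rw [compl_compl] at h₂
  nlinarith [h.1]

/-- A strongly connected directed graph `G` satisfies `bal(G) = 1` iff it is Eulerian. -/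
theorem stmt2 [Nontrivial V] (w : V → V → ℝ) (hw : ∀ u v, 0 ≤ w u v)
    (hsc : StronglyConnected w) :
    bal w = 1 ↔ IsEulerian w := by
  rw [← isCutRatioBound_one_iff]
  constructor
  · intro h
    exact h ▸ isCutRatioBound_bal (h ▸ one_ne_zero)
  · intro h
    exact le_antisymm (bal_le h) (le_csInf ⟨1, h⟩ fun α hα => IsCutRatioBound.one_le hα hw hsc)
end

section
/- Let G be an undirected graph, d a demand vector routable in G with congestion at most 1, and f a flow from s to t with congestion at most 1 satisfying demands (1−ε)d, for 0 < ε < 1. Then the residual graph H of f in G satisfies bal(H) ≤ 2/ε − 1. -/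
/-!
For a cut `S`, write `W` for the capacity across it and `B` for the total demand of `d` inside
`S`. Skew-symmetry and flow conservation make the net flow of `f` out of `S` equal to
`-(1 - ε) B`, so the residual capacities across the cut are `W + (1 - ε) B` out of `S` and
`W - (1 - ε) B` into `S`. Routability of `d` with congestion `1` gives the cut condition
`B ≤ W`, and the claimed bound is then equivalent to `0 ≤ 2 (1 - ε) (W - B)`.
-/

open Finset

variable {V : Type*} [Fintype V] [DecidableEq V]

/-- In the undirected graph with symmetric capacities `w`, the demand vector `b` can be
routed with congestion at most `c`: there is a skew-symmetric flow `g` with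
`|g u v| ≤ c · w u v` whose net inflow at each vertex `x` is `b x`. -/
def RoutesUndir (w : V → V → ℝ) (b : V → ℝ) (c : ℝ) : Prop :=
  ∃ g : V → V → ℝ, (∀ u v, g u v = -g v u) ∧ (∀ u v, |g u v| ≤ c * w u v) ∧
    ∀ x : V, (∑ u, g u x) = b x

lemma sum_sum_eq_zero_of_skew {α : Type*} (S : Finset α) {h : α → α → ℝ}
    (hskew : ∀ u v, h u v = -h v u) :
    ∑ x ∈ S, ∑ u ∈ S, h u x = 0 := by
  have hneg : ∑ x ∈ S, ∑ u ∈ S, h u x = -∑ x ∈ S, ∑ u ∈ S, h u x := by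
    conv_lhs => rw [sum_comm]
    simp only [← sum_neg_distrib]
    exact sum_congr rfl fun _ _ => sum_congr rfl fun _ _ => hskew _ _
  linarith

section CutWeight

variable (S : Finset V)

lemma cutWeight_eq_neg_sum_inflow {h : V → V → ℝ} (hskew : ∀ u v, h u v = -h v u) :
    cutWeight h S = -∑ x ∈ S, ∑ u, h u x := by
  have hsplit : ∀ x ∈ S, ∑ u, h u x = ∑ u ∈ S, h u x + ∑ u ∈ Sᶜ, -h x u := fun x _ => by
    rw [← sum_add_sum_compl S]
    congr 1
    exact sum_congr rfl fun u _ => hskew u x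
  rw [sum_congr rfl hsplit, sum_add_distrib, sum_sum_eq_zero_of_skew S hskew, zero_add]
  simp only [sum_neg_distrib, neg_neg, cutWeight]

lemma cutWeight_sub (w f : V → V → ℝ) :
    cutWeight (fun u v => w u v - f u v) S = cutWeight w S - cutWeight f S := by
  simp only [cutWeight, sum_sub_distrib]

lemma cutWeight_compl (w : V → V → ℝ) : cutWeight w Sᶜ = cutWeight (fun u v => w v u) S := by
  rw [cutWeight, compl_compl, sum_comm, cutWeight]

lemma cutWeight_compl_of_symm {w : V → V → ℝ} (hsymm : ∀ u v, w u v = w v u) :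
    cutWeight w Sᶜ = cutWeight w S := by
  rw [cutWeight_compl]
  simp only [← hsymm]

lemma cutWeight_compl_of_skew {f : V → V → ℝ} (hskew : ∀ u v, f u v = -f v u) :
    cutWeight f Sᶜ = -cutWeight f S := by
  rw [cutWeight_compl]
  simp only [cutWeight, ← sum_neg_distrib, ← hskew]

lemma RoutesUndir.sum_le_mul_cutWeight {w : V → V → ℝ} {b : V → ℝ} {c : ℝ}
    (hb : RoutesUndir w b c) : ∑ x ∈ S, b x ≤ c * cutWeight w S := by
  obtain ⟨g, hg_skew, hg_cong, hg_dem⟩ := hb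
  have hflow : cutWeight g S = -∑ x ∈ S, b x := by
    rw [cutWeight_eq_neg_sum_inflow S hg_skew]
    simp only [hg_dem]
  have hbound : -cutWeight g S ≤ cutWeight (fun u v => c * w u v) S :=
    neg_le_of_neg_le <| by
      simp only [cutWeight, ← sum_neg_distrib]
      exact sum_le_sum fun u _ => sum_le_sum fun v _ => neg_le_of_abs_le (hg_cong u v)
  rw [hflow, neg_neg] at hbound
  simpa only [cutWeight, mul_sum] using hbound

end CutWeight

lemma le_two_div_sub_one_mul {ε W B : ℝ} (hε0 : 0 < ε) (hε1 : ε < 1) (hB : B ≤ W) :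
    W + (1 - ε) * B ≤ (2 / ε - 1) * (W - (1 - ε) * B) := by
  rw [show 2 / ε - 1 = (2 - ε) / ε by field_simp, div_mul_eq_mul_div, le_div_iff₀ hε0]
  nlinarith [mul_nonneg (sub_nonneg.mpr hε1.le) (sub_nonneg.mpr hB)]

theorem stmt5_general (w : V → V → ℝ) (hsymm : ∀ u v, w u v = w v u)
    (d : V → ℝ)
    (hd : RoutesUndir w d 1)
    (ε : ℝ) (hε0 : 0 < ε) (hε1 : ε < 1)
    (f : V → V → ℝ) (hf_skew : ∀ u v, f u v = -f v u)
    (hf_dem : ∀ x : V, (∑ u, f u x) = (1 - ε) * d x) :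
    ∀ S : Finset V,
      cutWeight (fun u v => w u v - f u v) S ≤
        (2 / ε - 1) * cutWeight (fun u v => w u v - f u v) Sᶜ := by
  intro S
  have hflow : cutWeight f S = -((1 - ε) * ∑ x ∈ S, d x) := by
    rw [cutWeight_eq_neg_sum_inflow S hf_skew, mul_sum]
    simp only [hf_dem]
  have hcut : ∑ x ∈ S, d x ≤ cutWeight w S := by
    simpa only [one_mul] using hd.sum_le_mul_cutWeight S
  rw [cutWeight_sub, cutWeight_sub, cutWeight_compl_of_symm S hsymm,
    cutWeight_compl_of_skew S hf_skew, hflow, sub_neg_eq_add, neg_neg]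
  exact le_two_div_sub_one_mul hε0 hε1 hcut

/-- Let `G` be an undirected graph (symmetric capacities `w`), `d` a demand vector
supported on `{s, t}` routable in `G` with congestion at most `1`, and `f` a flow
from `s` to `t` with congestion at most `1` satisfying demands `(1−ε)·d`, where
`0 < ε < 1`.  Then the residual graph `H` of `f` in `G`, with residual capacities
`w u v − f u v` in direction `u → v`, satisfies `bal(H) ≤ 2/ε − 1`. -/
theorem stmt5 (w : V → V → ℝ) (hw : ∀ u v, 0 ≤ w u v) (hsymm : ∀ u v, w u v = w v u)
    (s t : V) (d : V → ℝ) (hd_supp : ∀ x, x ≠ s → x ≠ t → d x = 0)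
    (hd : RoutesUndir w d 1)
    (ε : ℝ) (hε0 : 0 < ε) (hε1 : ε < 1)
    (f : V → V → ℝ) (hf_skew : ∀ u v, f u v = -f v u)
    (hf_cong : ∀ u v, |f u v| ≤ w u v)
    (hf_dem : ∀ x : V, (∑ u, f u x) = (1 - ε) * d x) :
    ∀ S : Finset V,
      cutWeight (fun u v => w u v - f u v) S ≤
        (2 / ε - 1) * cutWeight (fun u v => w u v - f u v) Sᶜ :=
  stmt5_general w hsymm d hd ε hε0 hε1 f hf_skew hf_dem
end

section
/- No oblivious routing scheme for Eulerian directed graphs can guarantee a competitive ratio better than Ω(√n). Specifically, for the graph on n vertices consisting of a forward directed cycle C₁ of weight-1 edges and the reverse directed cycle C₂ (including an extra edge (v₁,vₙ)) of weight √n, any oblivious routing has competitive ratio at least √(n−1)/2. -/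
open Finset

section Framework

variable {V : Type*} [Fintype V] [DecidableEq V]

/-- A nonnegative flow supported on the edges of the graph. -/
def IsFlow (w : V → V → ℝ) (f : V → V → ℝ) : Prop :=
  (∀ x y, 0 ≤ f x y) ∧ (∀ x y, w x y = 0 → f x y = 0)

/-- Net outflow of `f` at `x`. -/
def netFlow (f : V → V → ℝ) (x : V) : ℝ :=
  (∑ y, f x y) - (∑ y, f y x)

/-- A unit flow from `u` to `v`. -/
def IsUnitFlow (w : V → V → ℝ) (u v : V) (f : V → V → ℝ) : Prop :=
  IsFlow w f ∧
    ∀ x, netFlow f x = (if x = u then (1 : ℝ) else 0) - (if x = v then 1 else 0)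

/-- `f` has congestion at most `c`. -/
def CongestionLe (w f : V → V → ℝ) (c : ℝ) : Prop :=
  ∀ x y, f x y ≤ c * w x y

/-- An oblivious routing scheme: a fixed unit flow for every pair. -/
def IsObliviousRouting (w : V → V → ℝ) (A : V → V → V → V → ℝ) : Prop :=
  ∀ u v, IsUnitFlow w u v (A u v)

/-- The multicommodity flow induced by `A` on demands `D`. -/
def inducedFlow (A : V → V → V → V → ℝ) (D : V → V → ℝ) : V → V → ℝ :=
  fun x y => ∑ u, ∑ v, D u v * A u v x y

/-- The demands `D` admit a multicommodity routing with congestion at most `c`. -/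
def MultiRoutable (w : V → V → ℝ) (D : V → V → ℝ) (c : ℝ) : Prop :=
  ∃ F : V → V → V → V → ℝ,
    (∀ u v, IsFlow w (F u v) ∧
      ∀ x, netFlow (F u v) x =
        D u v * ((if x = u then (1 : ℝ) else 0) - (if x = v then 1 else 0))) ∧
    CongestionLe w (fun x y => ∑ u, ∑ v, F u v x y) c

/-- `A` has competitive ratio at most `c`. -/
def CompetitiveRatioLe (w : V → V → ℝ) (A : V → V → V → V → ℝ) (c : ℝ) : Prop :=
  ∀ D : V → V → ℝ, (∀ u v, 0 ≤ D u v) →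
    ∀ c' > (0 : ℝ), MultiRoutable w D c' → CongestionLe w (inducedFlow A D) (c * c')

end Framework

/-- The Eulerian lower-bound graph on `Fin n`: the forward cycle `C₁` of weight-1
edges `i → i+1` and the reverse cycle `C₂` of weight-`√n` edges `i+1 → i`
(including the edge `v₁ → vₙ`). -/
noncomputable def cycWeight (n : ℕ) [NeZero n] : Fin n → Fin n → ℝ :=
  fun i j => (if j = i + 1 then 1 else 0) + (if i = j + 1 then Real.sqrt n else 0)

/-!
Route the single demand `(i, i + 1)` by sending a `1/(1 + √n)` fraction along the forward edge
and the rest backwards around `C₂`: this has congestion `1/(1 + √n)`, so the oblivious flow for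
`(i, i + 1)` puts at most `c/(1 + √n)` on its forward edge. Flow conservation on the cycle then
forces at least `1 - c/(1 + √n)` of it back along every other reverse edge, in particular along
`(v₂, v₁)`. The demand on all pairs `(i, i + 1)` is routed along `C₁` with congestion `1`, so
these `n - 1` contributions add up to at most `c√n`. Hence
`n - 1 ≤ c (2√n - 1) ≤ 2c√(n - 1)`.
-/

section Flows

variable {V : Type*}

def unitEdge [DecidableEq V] (u v : V) : V → V → ℝ :=
  fun x y => if x = u ∧ y = v then 1 else 0

lemma unitEdge_nonneg [DecidableEq V] (u v x y : V) : 0 ≤ unitEdge u v x y := by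
  unfold unitEdge; positivity

variable [Fintype V] {w : V → V → ℝ}

lemma netFlow_add (f g : V → V → ℝ) (x : V) :
    netFlow (fun a b => f a b + g a b) x = netFlow f x + netFlow g x := by
  simp only [netFlow, sum_add_distrib]; ring

lemma netFlow_const_mul (d : ℝ) (f : V → V → ℝ) (x : V) :
    netFlow (fun a b => d * f a b) x = d * netFlow f x := by
  simp only [netFlow, ← mul_sum, mul_sub]

variable [DecidableEq V]

lemma netFlow_unitEdge (u v x : V) :
    netFlow (unitEdge u v) x = (if x = u then 1 else 0) - (if x = v then 1 else 0) := by
  simp [netFlow, unitEdge, ite_and, eq_comm]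

lemma isUnitFlow_unitEdge {u v : V} (h : w u v ≠ 0) : IsUnitFlow w u v (unitEdge u v) := by
  refine ⟨⟨unitEdge_nonneg u v, fun x y hxy => ?_⟩, netFlow_unitEdge u v⟩
  rw [unitEdge, if_neg]
  rintro ⟨rfl, rfl⟩
  exact h hxy

lemma IsUnitFlow.convex_comb {u v : V} {f g : V → V → ℝ} {a b : ℝ}
    (hf : IsUnitFlow w u v f) (hg : IsUnitFlow w u v g) (ha : 0 ≤ a) (hb : 0 ≤ b)
    (hab : a + b = 1) : IsUnitFlow w u v (fun x y => a * f x y + b * g x y) := by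
  refine ⟨⟨fun x y => ?_, fun x y hxy => ?_⟩, fun x => ?_⟩
  · have := hf.1.1 x y; have := hg.1.1 x y; positivity
  · simp [hf.1.2 x y hxy, hg.1.2 x y hxy]
  · rw [netFlow_add, netFlow_const_mul, netFlow_const_mul, hf.2, hg.2, ← add_mul, hab, one_mul]

lemma IsUnitFlow.one_le_sum_out {u v : V} {f : V → V → ℝ} (hf : IsUnitFlow w u v f)
    (huv : u ≠ v) : 1 ≤ ∑ y, f u y := by
  have hnet := hf.2 u
  rw [netFlow, if_pos rfl, if_neg huv] at hnet
  have : 0 ≤ ∑ y, f y u := sum_nonneg fun y _ => hf.1.1 y u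
  linarith

lemma inducedFlow_unitEdge_right (A : V → V → V → V → ℝ) (u v : V) :
    inducedFlow A (unitEdge u v) = A u v := by
  ext x y
  simp [inducedFlow, unitEdge, ite_and]

lemma inducedFlow_unitEdge_left (D : V → V → ℝ) : inducedFlow unitEdge D = D := by
  ext x y
  simp [inducedFlow, unitEdge, ite_and]

lemma multiRoutable_of_isUnitFlow {D : V → V → ℝ} {g : V → V → V → V → ℝ} {c : ℝ}
    (hD : ∀ u v, 0 ≤ D u v) (hg : ∀ u v, D u v ≠ 0 → IsUnitFlow w u v (g u v))
    (hc : CongestionLe w (inducedFlow g D) c) : MultiRoutable w D c := by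
  refine ⟨fun u v x y => D u v * g u v x y, fun u v => ?_, hc⟩
  by_cases hDuv : D u v = 0
  · simp [IsFlow, hDuv, netFlow]
  · obtain ⟨⟨hpos, hsupp⟩, hnet⟩ := hg u v hDuv
    refine ⟨⟨fun x y => mul_nonneg (hD u v) (hpos x y), fun x y hxy => ?_⟩, fun x => ?_⟩
    · simp [hsupp x y hxy]
    · rw [netFlow_const_mul, hnet]

namespace CompetitiveRatioLe

variable {A : V → V → V → V → ℝ} {c c' : ℝ}

lemma congestionLe_inducedFlow (hA : CompetitiveRatioLe w A c) {D : V → V → ℝ}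
    (hD : ∀ u v, 0 ≤ D u v) (hc' : 0 < c') (hDw : ∀ u v, D u v ≤ c' * w u v) :
    CongestionLe w (inducedFlow A D) (c * c') := by
  refine hA D hD c' hc' (multiRoutable_of_isUnitFlow (g := unitEdge) hD (fun u v hDuv => ?_) ?_)
  · refine isUnitFlow_unitEdge fun hw => hDuv ?_
    linarith [hD u v, hDw u v, hw ▸ mul_zero c']
  · rwa [inducedFlow_unitEdge_left]

lemma congestionLe_of_isUnitFlow (hA : CompetitiveRatioLe w A c) {u v : V}
    {f : V → V → ℝ} (hf : IsUnitFlow w u v f) (hc' : 0 < c') (hcong : CongestionLe w f c') :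
    CongestionLe w (A u v) (c * c') := by
  have hroute : MultiRoutable w (unitEdge u v) c' := by
    refine multiRoutable_of_isUnitFlow (g := fun _ _ => f) (unitEdge_nonneg u v)
      (fun a b hab => ?_) ?_
    · obtain ⟨rfl, rfl⟩ : a = u ∧ b = v := by by_contra h; simp [unitEdge, h] at hab
      exact hf
    · rwa [inducedFlow_unitEdge_right]
  simpa [inducedFlow_unitEdge_right] using hA _ (unitEdge_nonneg u v) c' hc' hroute

end CompetitiveRatioLe

end Flows

theorem Fin.eq_of_forall_add_one {α : Type*} {n : ℕ} [NeZero n] {g : Fin n → α}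
    (h : ∀ v, g (v + 1) = g v) (x y : Fin n) : g x = g y := by
  have hcast : ∀ k : ℕ, g (Fin.ofNat n k) = g 0 := by
    intro k
    induction k with
    | zero => rfl
    | succ k ih =>
      rw [← ih, ← h (Fin.ofNat n k)]; congr 1; ext; simp [Fin.val_add, Nat.add_mod]
  rw [← Fin.ofNat_val_eq_self x, ← Fin.ofNat_val_eq_self y, hcast, hcast]

theorem Fin.one_add_one_ne_zero {n : ℕ} [NeZero n] (hn : 3 ≤ n) : (1 + 1 : Fin n) ≠ 0 := by
  simp [Fin.ext_iff, Fin.val_add, Nat.mod_eq_of_lt (show 1 < n by omega),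
    Nat.mod_eq_of_lt (show 2 < n by omega)]

section Cycle

variable {n : ℕ} [NeZero n] {A : Fin n → Fin n → Fin n → Fin n → ℝ} {c : ℝ}

lemma cycWeight_nonneg (x y : Fin n) : 0 ≤ cycWeight n x y := by
  unfold cycWeight; positivity

lemma cycWeight_eq_zero {x y : Fin n} (h₁ : y ≠ x + 1) (h₂ : x ≠ y + 1) :
    cycWeight n x y = 0 := by
  simp [cycWeight, h₁, h₂]

lemma sum_cycWeight (x : Fin n) : ∑ y, cycWeight n x y = 1 + √n := by
  have (y : Fin n) : x = y + 1 ↔ x - 1 = y := sub_eq_iff_eq_add.symm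
  simp [cycWeight, sum_add_distrib, this]

lemma cycWeight_pos_of_eq_add_one {x y : Fin n} (h : x = y + 1) : 0 < cycWeight n x y := by
  have : 0 < √n := by simp [Nat.pos_of_neZero]
  simp only [cycWeight, if_pos h]
  positivity

lemma cycWeight_add_one_pos (x : Fin n) : 0 < cycWeight n x (x + 1) := by
  simp only [cycWeight, ↓reduceIte]
  positivity

lemma cycWeight_add_one (hn : 3 ≤ n) (x : Fin n) : cycWeight n x (x + 1) = 1 := by
  have : x ≠ x + 1 + 1 := by
    rw [add_assoc]; exact fun h => Fin.one_add_one_ne_zero hn (by simpa using h.symm)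
  simp [cycWeight, this]

lemma cycWeight_one_zero (hn : 3 ≤ n) : cycWeight n 1 0 = √n := by
  have : (0 : Fin n) ≠ 1 + 1 := (Fin.one_add_one_ne_zero hn).symm
  simp [cycWeight, this]

-- The path `i → i - 1 → ⋯ → i + 1` around `C₂`.
def reversePath (i : Fin n) : Fin n → Fin n → ℝ :=
  fun x y => if x = y + 1 ∧ y ≠ i then 1 else 0

lemma isUnitFlow_reversePath (i : Fin n) :
    IsUnitFlow (cycWeight n) i (i + 1) (reversePath i) := by
  refine ⟨⟨fun x y => ?_, fun x y hxy => ?_⟩, fun x => ?_⟩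
  · unfold reversePath; positivity
  · rw [reversePath, if_neg]
    exact fun h => (cycWeight_pos_of_eq_add_one h.1).ne' hxy
  · have (y : Fin n) : x = y + 1 ↔ x - 1 = y := sub_eq_iff_eq_add.symm
    simp only [netFlow, reversePath, this, ne_eq, ite_and, ite_not, sum_ite_eq, mem_univ,
      ↓reduceIte, sum_ite_eq']
    rw [sub_eq_iff_eq_add]
    split_ifs <;> norm_num

noncomputable def splitFlow (i : Fin n) : Fin n → Fin n → ℝ :=
  fun x y => (1 + √n)⁻¹ * unitEdge i (i + 1) x y + (√n * (1 + √n)⁻¹) * reversePath i x y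

lemma isUnitFlow_splitFlow (i : Fin n) : IsUnitFlow (cycWeight n) i (i + 1) (splitFlow i) :=
  (isUnitFlow_unitEdge (cycWeight_add_one_pos i).ne').convex_comb
    (isUnitFlow_reversePath i) (by positivity) (by positivity) (by field_simp)

lemma congestionLe_splitFlow (i : Fin n) :
    CongestionLe (cycWeight n) (splitFlow i) (1 + √n)⁻¹ := by
  intro x y
  have hfwd : unitEdge i (i + 1) x y ≤ if y = x + 1 then 1 else 0 := by
    unfold unitEdge; split_ifs <;> simp_all
  have hrev : reversePath i x y ≤ if x = y + 1 then 1 else 0 := by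
    unfold reversePath; split_ifs <;> simp_all
  calc splitFlow i x y
      ≤ (1 + √n)⁻¹ * (if y = x + 1 then 1 else 0)
          + √n * (1 + √n)⁻¹ * (if x = y + 1 then 1 else 0) := by
        unfold splitFlow; gcongr
    _ = (1 + √n)⁻¹ * cycWeight n x y := by
        simp only [cycWeight, mul_ite]; split_ifs <;> ring

lemma CompetitiveRatioLe.congestionLe_cycWeight
    (hcomp : CompetitiveRatioLe (cycWeight n) A c) (i : Fin n) :
    CongestionLe (cycWeight n) (A i (i + 1)) (c * (1 + √n)⁻¹) :=
  hcomp.congestionLe_of_isUnitFlow (isUnitFlow_splitFlow i) (by positivity)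
    (congestionLe_splitFlow i)

lemma one_le_of_competitiveRatioLe_cycWeight (hn : 2 ≤ n)
    (hA : IsObliviousRouting (cycWeight n) A)
    (hcomp : CompetitiveRatioLe (cycWeight n) A c) : 1 ≤ c := by
  have h01 : (0 : Fin n) ≠ 0 + 1 := by simp; omega
  calc 1 ≤ ∑ y, A 0 (0 + 1) 0 y := (hA 0 (0 + 1)).one_le_sum_out h01
    _ ≤ ∑ y, c * (1 + √n)⁻¹ * cycWeight n 0 y :=
        sum_le_sum fun y _ => hcomp.congestionLe_cycWeight 0 0 y
    _ = c := by rw [← mul_sum, sum_cycWeight]; field_simp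

lemma netFlow_eq_of_isFlow_cycWeight (hn : 3 ≤ n) {f : Fin n → Fin n → ℝ}
    (hf : IsFlow (cycWeight n) f) (v : Fin n) :
    netFlow f v = (f v (v + 1) - f (v + 1) v) - (f (v - 1) v - f v (v - 1)) := by
  have hne : v + 1 ≠ v - 1 := fun h => Fin.one_add_one_ne_zero hn (by
    rw [← sub_eq_zero.mpr h]; abel)
  have hout : ∑ y, f v y = f v (v + 1) + f v (v - 1) := by
    rw [← sum_pair hne]
    refine (sum_subset (subset_univ _) fun y _ hy => hf.2 v y ?_).symm
    simp only [mem_insert, mem_singleton, not_or] at hy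
    exact cycWeight_eq_zero hy.1 fun h => hy.2 (eq_sub_of_add_eq h.symm)
  have hin : ∑ y, f y v = f (v + 1) v + f (v - 1) v := by
    rw [← sum_pair (f := (f · v)) hne]
    refine (sum_subset (subset_univ _) fun y _ hy => hf.2 y v ?_).symm
    simp only [mem_insert, mem_singleton, not_or] at hy
    exact cycWeight_eq_zero (fun h => hy.2 (eq_sub_of_add_eq h.symm)) hy.1
  rw [netFlow, hout, hin]; ring

lemma IsUnitFlow.one_le_add_reverse (hn : 3 ≤ n) {i x : Fin n} {f : Fin n → Fin n → ℝ}
    (hf : IsUnitFlow (cycWeight n) i (i + 1) f) (hx : x ≠ i) :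
    1 ≤ f i (i + 1) + f (x + 1) x := by
  -- `φ v` is the net forward flow from `v` to `v + 1`; conservation makes it drop by `1`
  -- at `i + 1` and stay constant elsewhere around the cycle.
  set φ : Fin n → ℝ := fun v => f v (v + 1) - f (v + 1) v
  have hstep (v : Fin n) :
      φ (v + 1) - (if v + 1 = i then 1 else 0) = φ v - (if v = i then 1 else 0) := by
    have := hf.2 (v + 1)
    rw [netFlow_eq_of_isFlow_cycWeight hn hf.1, add_sub_cancel_right] at this
    simp only [add_left_inj] at this
    linarith
  have hφ := Fin.eq_of_forall_add_one (g := fun v => φ v - if v = i then 1 else 0) hstep x i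
  simp only [φ, if_neg hx, if_true] at hφ
  linarith [hf.1.1 x (x + 1), hf.1.1 (i + 1) i]

lemma sub_one_mul_le_of_competitiveRatioLe_cycWeight (hn : 3 ≤ n)
    (hA : IsObliviousRouting (cycWeight n) A)
    (hcomp : CompetitiveRatioLe (cycWeight n) A c) :
    (n - 1) * (1 - c * (1 + √n)⁻¹) ≤ c * √n := by
  have hreverse : ∀ u ∈ univ.erase 0, 1 - c * (1 + √n)⁻¹ ≤ A u (u + 1) 1 0 := by
    intro u hu
    have hflow := (hA u (u + 1)).one_le_add_reverse hn (ne_of_mem_erase hu).symm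
    have hdirect := hcomp.congestionLe_cycWeight u u (u + 1)
    rw [cycWeight_add_one hn, mul_one] at hdirect
    rw [zero_add] at hflow
    linarith
  have hcycle : ∑ u, A u (u + 1) 1 0 ≤ c * √n := by
    have hD := hcomp.congestionLe_inducedFlow (D := fun u v => if v = u + 1 then 1 else 0)
      (fun u v => by positivity) one_pos
      (fun u v => by
        split_ifs with h
        · rw [h, cycWeight_add_one hn, one_mul]
        · rw [one_mul]; exact cycWeight_nonneg u v) 1 0
    simpa [inducedFlow, cycWeight_one_zero hn] using hD
  calc (n - 1) * (1 - c * (1 + √n)⁻¹)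
      = (univ.erase (0 : Fin n)).card • (1 - c * (1 + √n)⁻¹) := by
        rw [card_erase_of_mem (mem_univ 0), card_univ, Fintype.card_fin,
          nsmul_eq_mul, Nat.cast_pred (Nat.pos_of_neZero n)]
    _ ≤ ∑ u ∈ univ.erase 0, A u (u + 1) 1 0 := card_nsmul_le_sum _ _ _ hreverse
    _ ≤ ∑ u, A u (u + 1) 1 0 :=
        sum_le_sum_of_subset_of_nonneg (erase_subset _ _)
          fun u _ _ => (hA u (u + 1)).1.1 1 0
    _ ≤ c * √n := hcycle

end Cycle

lemma sqrt_sub_one_div_two_le {x c : ℝ} (hx : 2 ≤ x)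
    (h : (x - 1) * (1 - c * (1 + √x)⁻¹) ≤ c * √x) : √(x - 1) / 2 ≤ c := by
  set s := √x
  set r := √(x - 1)
  have hs2 : s ^ 2 = x := Real.sq_sqrt (by linarith)
  have hr2 : r ^ 2 = x - 1 := Real.sq_sqrt (by linarith)
  have hs : 5 / 4 ≤ s := by nlinarith [Real.sqrt_nonneg x]
  have hr : 1 ≤ r := by nlinarith [Real.sqrt_nonneg (x - 1)]
  have hquot : (x - 1) * (1 + s)⁻¹ = s - 1 := by
    rw [← hs2]; field_simp; ring
  have hmain : r ^ 2 ≤ c * (2 * s - 1) := by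
    rw [mul_sub, mul_one, ← mul_assoc, mul_comm _ c, mul_assoc, hquot] at h
    nlinarith
  have hc : 0 ≤ c := by nlinarith
  have hsr : 2 * s - 1 ≤ 2 * r := by nlinarith
  have hr2c : r * r ≤ 2 * c * r := by nlinarith
  linarith [le_of_mul_le_mul_right hr2c (by linarith)]

theorem stmt9_general (n : ℕ) [NeZero n] (hn : 2 ≤ n)
    (A : Fin n → Fin n → Fin n → Fin n → ℝ)
    (hA : IsObliviousRouting (cycWeight n) A)
    (c : ℝ) (hcomp : CompetitiveRatioLe (cycWeight n) A c) :
    Real.sqrt (n - 1) / 2 ≤ c := by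
  rcases hn.eq_or_lt with rfl | hn3
  · -- for `n = 2` the forward and reverse edges coincide, and `1 ≤ c` already suffices
    have h2 : √((2 : ℕ) - 1 : ℝ) = 1 := by norm_num
    linarith [one_le_of_competitiveRatioLe_cycWeight le_rfl hA hcomp]
  · exact sqrt_sub_one_div_two_le (by exact_mod_cast hn)
      (sub_one_mul_le_of_competitiveRatioLe_cycWeight hn3 hA hcomp)

/-- No oblivious routing on the Eulerian two-cycle graph has competitive ratio better
than `√(n−1)/2`; hence no oblivious routing for Eulerian graphs can guarantee a
competitive ratio better than `Ω(√n)`. -/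
theorem stmt9 (n : ℕ) [NeZero n] (hn : 2 ≤ n)
    (A : Fin n → Fin n → Fin n → Fin n → ℝ)
    (hA : IsObliviousRouting (cycWeight n) A)
    (c : ℝ) (hc : 0 ≤ c) (hcomp : CompetitiveRatioLe (cycWeight n) A c) :
    Real.sqrt (n - 1) / 2 ≤ c :=
  stmt9_general n hn A hA c hcomp
end

section
/- Let G be a directed Eulerian weighted graph with edge lengths, and let 0 < x_L < x_R. Let G′ be G collapsed to [x_L, x_R]. Then vol(G′) ≤ 2·Σ_{e ∈ E : l(e) > x_L/n} w(e)·min(l(e), x_R), where n is the number of vertices. -/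
open Finset
open scoped Classical

variable {V : Type*} [Fintype V] [DecidableEq V]

/-- Reachability following only arcs of length at most `xL`. -/
def ShortReach (w l : V → V → ℝ) (xL : ℝ) : V → V → Prop :=
  Relation.ReflTransGen (fun a b => 0 < w a b ∧ l a b ≤ xL)

/-- `u` and `v` are merged when collapsing to `[xL, xR]`: they can reach each other
following only arcs of length at most `xL`. -/
def Merged (w l : V → V → ℝ) (xL : ℝ) (u v : V) : Prop :=
  ShortReach w l xL u v ∧ ShortReach w l xL v u

/-!
Split the unmerged arcs of `G` at length `xL / n`. The long ones contribute at most the right-hand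
side. A short unmerged arc `(u, v)` leaves the set `S_u` of vertices that reach `u` along short
arcs, and by the Eulerian property the weight leaving `S_u` equals the weight entering it, which
travels on arcs of length `> xL` only. Summing over the `n` vertices `u`, the short unmerged
arcs carry weight at most `n · W`, where `W` is the weight on arcs longer than `xL`; as they have
length `≤ xL / n`, they contribute at most `xL · W`, which is again at most the right-hand side.
-/

noncomputable def weightAbove (w l : V → V → ℝ) (t : ℝ) : ℝ :=
  ∑ u, ∑ v, if t < l u v then w u v else 0

noncomputable def shortReachers (w l : V → V → ℝ) (xL : ℝ) (x : V) : Finset V :=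
  {z | ShortReach w l xL z x}

theorem IsEulerian.sum_out_eq_sum_in {w : V → V → ℝ} (heul : IsEulerian w) (S : Finset V) :
    ∑ u ∈ S, ∑ v ∈ Sᶜ, w u v = ∑ u ∈ Sᶜ, ∑ v ∈ S, w u v := by
  have hin : ∑ v ∈ S, ∑ u, w u v = ∑ u ∈ S, ∑ v ∈ S, w u v + ∑ u ∈ Sᶜ, ∑ v ∈ S, w u v := by
    simp_rw [← sum_add_sum_compl S (fun u => w u _), sum_add_distrib]
    rw [sum_comm (s := S) (t := S), sum_comm (s := S) (t := Sᶜ)]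
  have hout : ∑ v ∈ S, ∑ u, w v u = ∑ u ∈ S, ∑ v ∈ S, w u v + ∑ u ∈ S, ∑ v ∈ Sᶜ, w u v := by
    simp_rw [← sum_add_sum_compl S (fun u => w _ u), sum_add_distrib]
  have := sum_congr rfl fun v (_ : v ∈ S) => heul v
  linarith

omit [DecidableEq V] in
theorem lt_of_notMem_shortReachers_of_mem {w l : V → V → ℝ} {xL : ℝ} {x u v : V}
    (hu : u ∉ shortReachers w l xL x) (hv : v ∈ shortReachers w l xL x) (hwuv : 0 < w u v) :
    xL < l u v := by
  simp only [shortReachers, mem_filter, mem_univ, true_and] at hu hv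
  by_contra! hshort
  exact hu (.head ⟨hwuv, hshort⟩ hv)

omit [DecidableEq V] in
theorem notMem_shortReachers_of_not_merged {w l : V → V → ℝ} {xL : ℝ} {u v : V}
    (hwuv : 0 < w u v) (hshort : l u v ≤ xL) (hm : ¬ Merged w l xL u v) :
    v ∉ shortReachers w l xL u := by
  simp only [shortReachers, mem_filter, mem_univ, true_and]
  exact fun hvu => hm ⟨.single ⟨hwuv, hshort⟩, hvu⟩

theorem sum_out_shortReachers_le {w l : V → V → ℝ} (hw : ∀ u v, 0 ≤ w u v)
    (heul : IsEulerian w) (xL : ℝ) (x : V) :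
    ∑ u ∈ shortReachers w l xL x, ∑ v ∈ (shortReachers w l xL x)ᶜ, w u v ≤ weightAbove w l xL := by
  set S := shortReachers w l xL x
  have hlong : ∀ u ∈ Sᶜ, ∀ v ∈ S, w u v ≤ if xL < l u v then w u v else 0 := by
    intro u hu v hv
    rcases (hw u v).eq_or_lt with hzero | hpos
    · simp [← hzero]
    · rw [if_pos (lt_of_notMem_shortReachers_of_mem (mem_compl.mp hu) hv hpos)]
  have hnonneg : ∀ u v, 0 ≤ if xL < l u v then w u v else 0 := fun u v => ite_nonneg (hw u v) le_rfl
  calc _ = ∑ u ∈ Sᶜ, ∑ v ∈ S, w u v := heul.sum_out_eq_sum_in S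
    _ ≤ ∑ u ∈ Sᶜ, ∑ v ∈ S, if xL < l u v then w u v else 0 :=
        sum_le_sum fun u hu => sum_le_sum fun v hv => hlong u hu v hv
    _ ≤ ∑ u ∈ Sᶜ, ∑ v, if xL < l u v then w u v else 0 :=
        sum_le_sum fun u _ => sum_le_univ_sum_of_nonneg (hnonneg u)
    _ ≤ weightAbove w l xL :=
        sum_le_univ_sum_of_nonneg fun u => sum_nonneg fun v _ => hnonneg u v

theorem sum_unmerged_short_le {w l : V → V → ℝ} (hw : ∀ u v, 0 ≤ w u v) (xL : ℝ) (u : V) :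
    (∑ v, if ¬ Merged w l xL u v ∧ l u v ≤ xL then w u v else 0) ≤
      ∑ u' ∈ shortReachers w l xL u, ∑ v ∈ (shortReachers w l xL u)ᶜ, w u' v := by
  set S := shortReachers w l xL u
  have hterm : ∀ v, (if ¬ Merged w l xL u v ∧ l u v ≤ xL then w u v else 0) ≤
      if v ∈ Sᶜ then w u v else 0 := by
    intro v
    split_ifs with hunmerged hout
    · exact le_rfl
    · rcases (hw u v).eq_or_lt with hzero | hpos
      · exact hzero.symm.le
      · exact absurd (mem_compl.mpr (notMem_shortReachers_of_not_merged hpos hunmerged.2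
          hunmerged.1)) hout
    · exact hw u v
    · exact le_rfl
  have huS : u ∈ S := mem_filter.mpr ⟨mem_univ u, .refl⟩
  calc _ ≤ ∑ v, if v ∈ Sᶜ then w u v else 0 := sum_le_sum fun v _ => hterm v
    _ = ∑ v ∈ Sᶜ, w u v := by rw [sum_ite_mem, univ_inter]
    _ ≤ _ := single_le_sum (f := fun u' => ∑ v ∈ Sᶜ, w u' v)
        (fun u' _ => sum_nonneg fun v _ => hw u' v) huS

theorem sum_unmerged_short_le_card_mul {w l : V → V → ℝ} (hw : ∀ u v, 0 ≤ w u v)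
    (heul : IsEulerian w) (xL : ℝ) :
    (∑ u, ∑ v, if ¬ Merged w l xL u v ∧ l u v ≤ xL then w u v else 0) ≤
      Fintype.card V * weightAbove w l xL :=
  calc _ ≤ ∑ _u : V, weightAbove w l xL :=
        sum_le_sum fun u _ => (sum_unmerged_short_le hw xL u).trans
          (sum_out_shortReachers_le hw heul xL u)
    _ = Fintype.card V * weightAbove w l xL := by simp

theorem ite_mul_min_le_add {w l t xL xR : ℝ} (P : Prop) [Decidable P] (hw : 0 ≤ w) (ht : 0 ≤ t)
    (htxL : t ≤ xL) (hxR : 0 ≤ xR) :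
    (if P then w * min l xR else 0) ≤
      t * (if P ∧ l ≤ xL then w else 0) + if t < l then w * min l xR else 0 := by
  by_cases hP : P
  · rw [if_pos hP]
    rcases le_or_gt l t with hshort | hlong
    · rw [if_pos ⟨hP, hshort.trans htxL⟩, if_neg hshort.not_gt, add_zero, mul_comm t]
      exact mul_le_mul_of_nonneg_left ((min_le_left l xR).trans hshort) hw
    · rw [if_pos hlong]
      exact le_add_of_nonneg_left (mul_nonneg ht (ite_nonneg hw le_rfl))
  · rw [if_neg hP, if_neg fun h => hP h.1, mul_zero, zero_add]
    split_ifs with hlong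
    · exact mul_nonneg hw (le_min (ht.trans hlong.le) hxR)
    · exact le_rfl

omit [DecidableEq V] in
theorem mul_weightAbove_le {w l : V → V → ℝ} (hw : ∀ u v, 0 ≤ w u v) {t xL xR : ℝ}
    (ht : 0 ≤ t) (htxL : t ≤ xL) (hxLR : xL ≤ xR) :
    xL * weightAbove w l xL ≤ ∑ u, ∑ v, if t < l u v then w u v * min (l u v) xR else 0 := by
  rw [weightAbove, mul_sum]
  refine sum_le_sum fun u _ => ?_
  rw [mul_sum]
  refine sum_le_sum fun v _ => ?_
  by_cases hlong : xL < l u v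
  · rw [if_pos hlong, if_pos (htxL.trans_lt hlong), mul_comm]
    exact mul_le_mul_of_nonneg_left (le_min hlong.le hxLR) (hw u v)
  · rw [if_neg hlong, mul_zero]
    split_ifs with htl
    · exact mul_nonneg (hw u v) (le_min (ht.trans htl.le) ((ht.trans htxL).trans hxLR))
    · exact le_rfl

theorem stmt10_general (w l : V → V → ℝ) (hw : ∀ u v, 0 ≤ w u v)
    (heul : IsEulerian w) (xL xR : ℝ) (hxL : 0 < xL) (hxLR : xL < xR) :
    (∑ u, ∑ v, if ¬ Merged w l xL u v then w u v * min (l u v) xR else 0) ≤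
      2 * ∑ u, ∑ v,
        if xL / (Fintype.card V) < l u v then w u v * min (l u v) xR else 0 := by
  rcases isEmpty_or_nonempty V with hV | hV
  · simp
  have hn : (0 : ℝ) < Fintype.card V := Nat.cast_pos.mpr Fintype.card_pos
  set t := xL / (Fintype.card V : ℝ)
  set R := ∑ u, ∑ v, if t < l u v then w u v * min (l u v) xR else 0
  have ht : 0 ≤ t := by positivity
  have htxL : t ≤ xL := div_le_self hxL.le (Nat.one_le_cast.mpr Fintype.card_pos)
  calc _ ≤ ∑ u, ∑ v, (t * (if ¬ Merged w l xL u v ∧ l u v ≤ xL then w u v else 0) +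
          if t < l u v then w u v * min (l u v) xR else 0) :=
        sum_le_sum fun u _ => sum_le_sum fun v _ =>
          ite_mul_min_le_add _ (hw u v) ht htxL (hxL.trans hxLR).le
    _ = t * (∑ u, ∑ v, if ¬ Merged w l xL u v ∧ l u v ≤ xL then w u v else 0) + R := by
        simp only [R, mul_sum, sum_add_distrib]
    _ ≤ t * (Fintype.card V * weightAbove w l xL) + R := by
        gcongr
        exact sum_unmerged_short_le_card_mul hw heul xL
    _ = xL * weightAbove w l xL + R := by
        rw [← mul_assoc, div_mul_cancel₀ _ hn.ne']
    _ ≤ R + R := by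
        gcongr
        exact mul_weightAbove_le hw ht htxL hxLR.le
    _ = 2 * R := by ring

/-- Let `G` be a directed Eulerian weighted graph with edge lengths and `0 < xL < xR`.
The volume of `G` collapsed to `[xL, xR]` (edges inside merged classes disappear and
lengths are clipped to at most `xR`) is at most
`2 · Σ_{e : l(e) > xL/n} w(e) · min(l(e), xR)`. -/
theorem stmt10 (w l : V → V → ℝ) (hw : ∀ u v, 0 ≤ w u v) (hl : ∀ u v, 0 ≤ l u v)
    (heul : IsEulerian w) (xL xR : ℝ) (hxL : 0 < xL) (hxLR : xL < xR) :
    (∑ u, ∑ v, if ¬ Merged w l xL u v then w u v * min (l u v) xR else 0) ≤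
      2 * ∑ u, ∑ v,
        if xL / (Fintype.card V) < l u v then w u v * min (l u v) xR else 0 :=
  stmt10_general w l hw heul xL xR hxL hxLR
end

section
/- Let s : ℤ → ℝ satisfy s_{i+k} = s_i − L for all i (k ∈ ℕ, L > 0), and let a : ℤ → Fin n be k-periodic. Define c_i = a_j where j is the minimal index minimizing s over {q : q ≤ i}, and define f(y) = a_j where j is the minimal index with s_j ≤ y (assuming these minima exist). Then c is k-periodic and f is L-periodic, and for any i ∈ ℤ and y ∈ ℝ, the number of value changes in the sequence c_i, c_{i+1}, …, c_{i+k} equals the number of value changes of f on the interval [y, y+L]. -/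
/-!
The running minimum of `s` is attained at its records (indices whose value beats all earlier
ones): `j i` is the last record up to `i` and `J y` the first record at level `≤ y`. So `c` can
only change at a record `r`, and does so iff `a r` differs from `a p` at the preceding record `p`.
Likewise `f` equals `a r` on `[s r, s p)`, so its left jumps are the points `s p` with `a r ≠ a p`.
Both sides thus count such switching records, in the windows `(i, i + k]` and
`(J (y + L), J y]` of length `k`; the switching property is `k`-periodic since `s` drops by `L`
over a period and `a` is periodic, and a periodic predicate has the same count in every window.
-/

open Finset Function

section PeriodicCount

variable {α : Type*} [AddCommGroup α] [LinearOrder α] [IsOrderedAddMonoid α] [Archimedean α]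
  [LocallyFiniteOrder α]

theorem Function.Periodic.card_filter_Ioc_eq {B : α → Prop} [DecidablePred B] {p : α}
    (hB : Periodic B p) (hp : 0 < p) (u v : α) :
    #{x ∈ Ioc u (u + p) | B x} = #{x ∈ Ioc v (v + p) | B x} := by
  have maps : ∀ u v : α, Set.MapsTo (toIocMod hp v)
      ({x ∈ Ioc u (u + p) | B x} : Finset α) ({x ∈ Ioc v (v + p) | B x} : Finset α) := by
    intro u v x hx
    rw [mem_coe, mem_filter] at hx ⊢
    refine ⟨mem_Ioc.2 (toIocMod_mem_Ioc hp v x), ?_⟩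
    rw [toIocMod, hB.sub_zsmul_eq]
    exact hx.2
  have inv : ∀ u v : α, ∀ x ∈ ({x ∈ Ioc u (u + p) | B x} : Finset α),
      toIocMod hp u (toIocMod hp v x) = x := by
    intro u v x hx
    rw [toIocMod_toIocMod, toIocMod_eq_self]
    exact mem_Ioc.1 (mem_filter.1 hx).1
  exact card_nbij' _ _ (maps u v) (maps v u) (inv u v) (inv v u)

end PeriodicCount

section Records

variable {α : Type*} [LinearOrder α] {s : ℤ → α} {i m p q r x x' : ℤ}

def IsRecord (s : ℤ → α) (r : ℤ) : Prop :=
  ∀ q < r, s r < s q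

def IsFirstArgminIic (s : ℤ → α) (i x : ℤ) : Prop :=
  x ≤ i ∧ (∀ q ≤ i, s x ≤ s q) ∧ ∀ q ≤ i, s q ≤ s x → x ≤ q

theorem IsRecord.le_of_le (hr : IsRecord s r) (hq : q ≤ r) : s r ≤ s q := by
  rcases hq.eq_or_lt with rfl | hq
  exacts [le_rfl, (hr q hq).le]

theorem IsRecord.injOn : Set.InjOn s {r | IsRecord s r} := by
  intro r hr r' hr' h
  rcases lt_trichotomy r r' with hlt | heq | hlt
  exacts [((hr' r hlt).ne h.symm).elim, heq, ((hr r' hlt).ne h).elim]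

theorem IsRecord.isLeast (hr : IsRecord s r) : IsLeast {q | s q ≤ s r} r :=
  ⟨le_refl (s r), fun q hq => not_lt.1 fun h => (hr q h).not_ge hq⟩

theorem IsLeast.isRecord {y : α} (h : IsLeast {q | s q ≤ y} r) : IsRecord s r :=
  fun _ hq => h.1.trans_lt <| lt_of_not_ge fun hle => (h.2 hle).not_gt hq

theorem IsRecord.apply_le_iff {y : α} (hp : IsRecord s p) (h : IsLeast {q | s q ≤ y} r) :
    s p ≤ y ↔ r ≤ p :=
  ⟨fun hy => h.2 hy, fun hrp => (hp.le_of_le hrp).trans h.1⟩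

theorem isFirstArgminIic_self_iff : IsFirstArgminIic s r r ↔ IsRecord s r := by
  refine ⟨fun h q hq => ?_, fun hr => ⟨le_rfl, fun q => hr.le_of_le, fun q hq hle => ?_⟩⟩
  · exact lt_of_not_ge fun hle => (h.2.2 q hq.le hle).not_gt hq
  · exact not_lt.1 fun hlt => (hr q hlt).not_ge hle

namespace IsFirstArgminIic

theorem unique (h : IsFirstArgminIic s i x) (h' : IsFirstArgminIic s i x') : x = x' :=
  le_antisymm (h.2.2 x' h'.1 (h'.2.1 x h.1)) (h'.2.2 x h.1 (h.2.1 x' h'.1))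

theorem isRecord (h : IsFirstArgminIic s i x) : IsRecord s x := fun q hq =>
  lt_of_not_ge fun hle => (h.2.2 q (hq.le.trans h.1) hle).not_gt hq

theorem le_iff (h : IsFirstArgminIic s m x) (hr : IsRecord s r) : r ≤ x ↔ r ≤ m :=
  ⟨fun hrx => hrx.trans h.1, fun hrm => not_lt.1 fun hxr => (hr x hxr).not_ge (h.2.1 r hrm)⟩

theorem succ_of_not_isRecord (h : IsFirstArgminIic s m x) (hr : ¬IsRecord s (m + 1)) :
    IsFirstArgminIic s (m + 1) x := by
  obtain ⟨q₀, hq₀, hle⟩ : ∃ q₀ < m + 1, s q₀ ≤ s (m + 1) := by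
    simpa [IsRecord] using hr
  have hx : s x ≤ s (m + 1) := (h.2.1 q₀ (by omega)).trans hle
  refine ⟨by linarith [h.1], fun q hq => ?_, fun q hq hsq => ?_⟩
  · rcases hq.eq_or_lt with rfl | hq
    exacts [hx, h.2.1 q (by omega)]
  · rcases hq.eq_or_lt with rfl | hq
    exacts [by linarith [h.1], h.2.2 q (by omega) hsq]

theorem of_isLeast_lt (hp : IsRecord s p) (hr : IsLeast {q | s q < s p} r) :
    IsFirstArgminIic s (r - 1) p := by
  have hpr : p < r := lt_of_not_ge fun hrp => (hp.le_of_le hrp).not_gt hr.1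
  have hmin : ∀ q ≤ r - 1, s p ≤ s q := fun q hq => not_lt.1 fun h => by have := hr.2 h; omega
  refine ⟨by omega, hmin, fun q hq hsq => not_lt.1 fun hqp => (hp q hqp).not_ge hsq⟩

theorem isLeast_of_pred {z : α} (hp : IsFirstArgminIic s (r - 1) p) (hr : s r ≤ z)
    (hz : z < s p) : IsLeast {q | s q ≤ z} r :=
  ⟨hr, fun q hq => not_lt.1 fun hqr => (hp.2.1 q (by omega)).not_gt (lt_of_le_of_lt hq hz)⟩

end IsFirstArgminIic

end Records

theorem apply_sub_eq_add {α : Type*} [AddGroup α] {s : ℤ → α} {k : ℤ} {L : α}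
    (hs : ∀ i, s (i + k) = s i - L) (i : ℤ) : s (i - k) = s i + L := by
  rw [← sub_add_cancel i k, hs, add_sub_cancel_right, sub_add_cancel]

section Shift

variable {α : Type*} [AddCommGroup α] [LinearOrder α] [IsOrderedAddMonoid α] {s : ℤ → α}
  {k : ℤ} {L : α}

theorem isRecord_add_iff (hs : ∀ i, s (i + k) = s i - L) {r : ℤ} :
    IsRecord s (r + k) ↔ IsRecord s r := by
  refine ⟨fun h q hq => ?_, fun h q hq => ?_⟩
  · simpa [hs] using h (q + k) (by omega)
  · simpa [apply_sub_eq_add hs, hs, sub_lt_iff_lt_add] using h (q - k) (by omega)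

theorem IsFirstArgminIic.add_period (hs : ∀ i, s (i + k) = s i - L) {i x : ℤ}
    (h : IsFirstArgminIic s i x) : IsFirstArgminIic s (i + k) (x + k) := by
  refine ⟨by linarith [h.1], fun q hq => ?_, fun q hq hsq => ?_⟩
  · simpa [hs, apply_sub_eq_add hs] using h.2.1 (q - k) (by omega)
  · have hsq' : s (q - k) ≤ s x := by simpa [hs, apply_sub_eq_add hs, le_sub_iff_add_le] using hsq
    have := h.2.2 (q - k) (by omega) hsq'
    omega

theorem IsLeast.sub_period (hs : ∀ i, s (i + k) = s i - L) {y : α} {r : ℤ}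
    (h : IsLeast {q | s q ≤ y} r) : IsLeast {q | s q ≤ y + L} (r - k) := by
  refine ⟨by simpa [apply_sub_eq_add hs] using h.1, fun q hq => ?_⟩
  have := h.2 (show s (q + k) ≤ y by simpa [hs] using hq)
  omega

theorem isFirstArgminIic_apply_add (hs : ∀ i, s (i + k) = s i - L) {j : ℤ → ℤ}
    (hj : ∀ i, IsFirstArgminIic s i (j i)) (i : ℤ) : j (i + k) = j i + k :=
  (hj _).unique ((hj i).add_period hs)

theorem isLeast_apply_add (hs : ∀ i, s (i + k) = s i - L) {J : α → ℤ}
    (hJ : ∀ y, IsLeast {q | s q ≤ y} (J y)) (y : α) : J (y + L) = J y - k :=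
  (hJ _).unique ((hJ y).sub_period hs)

end Shift

section Switch

variable {α β : Type*} [LinearOrder α] {s : ℤ → α} {j : ℤ → ℤ}

/-- Under `∀ i, IsFirstArgminIic s i (j i)`, `j (r - 1)` is the record preceding `r`. -/
def IsSwitchRecord (s : ℤ → α) (j : ℤ → ℤ) (a : ℤ → β) (r : ℤ) : Prop :=
  IsRecord s r ∧ a r ≠ a (j (r - 1))

theorem ne_succ_iff_isSwitchRecord (hj : ∀ i, IsFirstArgminIic s i (j i)) (a : ℤ → β) (m : ℤ) :
    a (j m) ≠ a (j (m + 1)) ↔ IsSwitchRecord s j a (m + 1) := by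
  by_cases hr : IsRecord s (m + 1)
  · have hjm : j (m + 1) = m + 1 := (hj _).unique (isFirstArgminIic_self_iff.2 hr)
    simp [IsSwitchRecord, hr, hjm, ne_comm]
  · have hjm : j (m + 1) = j m := (hj _).unique ((hj m).succ_of_not_isRecord hr)
    simp [IsSwitchRecord, hr, hjm]

open Classical in
theorem card_filter_ne_succ_eq [DecidableEq β] (hj : ∀ i, IsFirstArgminIic s i (j i))
    (a : ℤ → β) (u v : ℤ) :
    #{m ∈ Ico u v | a (j m) ≠ a (j (m + 1))} = #{r ∈ Ioc u v | IsSwitchRecord s j a r} := by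
  rw [← Ico_add_one_add_one_eq_Ioc, ← map_add_right_Ico, filter_map, card_map]
  exact congrArg card (filter_congr fun m _ => ne_succ_iff_isSwitchRecord hj a m)

theorem injOn_apply_pred (hj : ∀ i, IsFirstArgminIic s i (j i)) :
    Set.InjOn (fun r => s (j (r - 1))) {r | IsRecord s r} := by
  have key : ∀ r r', IsRecord s r → j (r' - 1) = j (r - 1) → r' ≤ r := fun r r' hr h =>
    not_lt.1 fun hlt => by
      have := ((hj (r' - 1)).le_iff hr).2 (by omega)
      have := (hj (r - 1)).1
      omega
  intro r hr r' hr' h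
  have hj' := IsRecord.injOn (hj (r - 1)).isRecord (hj (r' - 1)).isRecord h
  exact le_antisymm (key r' r hr' hj') (key r r' hr hj'.symm)

theorem isSwitchRecord_periodic [AddCommGroup α] [IsOrderedAddMonoid α] {k : ℤ} {L : α}
    (hs : ∀ i, s (i + k) = s i - L) (hj : ∀ i, IsFirstArgminIic s i (j i)) {a : ℤ → β}
    (ha : Periodic a k) : Periodic (IsSwitchRecord s j a) k := by
  intro r
  have hjk : j (r + k - 1) = j (r - 1) + k := by
    rw [show r + k - 1 = r - 1 + k by ring, isFirstArgminIic_apply_add hs hj]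
  simp only [IsSwitchRecord, isRecord_add_iff hs, hjk, ha r, ha (j (r - 1))]

end Switch

section LeftJumps

variable {β : Type*} {s : ℤ → ℝ} {j : ℤ → ℤ} {J : ℝ → ℤ}

def IsLeftJump (g : ℝ → β) (z : ℝ) : Prop :=
  ∀ δ > 0, ∃ z' ∈ Set.Ioo (z - δ) z, g z' ≠ g z

theorem isLeftJump_comp_iff (hj : ∀ i, IsFirstArgminIic s i (j i))
    (hJ : ∀ y, IsLeast {q | s q ≤ y} (J y)) (a : ℤ → β) (z : ℝ) :
    IsLeftJump (a ∘ J) z ↔ ∃ r, IsSwitchRecord s j a r ∧ s (j (r - 1)) = z := by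
  constructor
  · intro hjump
    have hp : IsRecord s (J z) := (hJ z).isRecord
    have hsp : s (J z) = z := by
      by_contra hne
      obtain ⟨z', hz', hne'⟩ := hjump (z - s (J z)) (sub_pos.2 (lt_of_le_of_ne (hJ z).1 hne))
      rw [sub_sub_cancel] at hz'
      have hJz' : IsLeast {q | s q ≤ z'} (J z) :=
        ⟨hz'.1.le, fun q hq => (hJ z).2 (hq.trans hz'.2.le)⟩
      exact hne' (congrArg a ((hJ z').unique hJz'))
    obtain ⟨z₀, hz₀, -⟩ := hjump 1 one_pos
    -- `r` is the record following `J z`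
    obtain ⟨r, hr⟩ : ∃ r, IsLeast {q | s q < s (J z)} r :=
      Int.exists_least_of_bdd ⟨J z, fun q hq => not_lt.1 fun h => (hp q h).not_gt hq⟩
        ⟨J z₀, (hJ z₀).1.trans_lt (hsp ▸ hz₀.2)⟩
    have hpred : IsFirstArgminIic s (r - 1) (J z) := .of_isLeast_lt hp hr
    have hsr : s r < z := hsp ▸ hr.1
    obtain ⟨z', hz', hne'⟩ := hjump (z - s r) (sub_pos.2 hsr)
    have hJz' : J z' = r :=
      (hJ z').unique (hpred.isLeast_of_pred (by linarith [hz'.1]) (hz'.2.trans_eq hsp.symm))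
    have hjr : j (r - 1) = J z := (hj (r - 1)).unique hpred
    refine ⟨r, ⟨hJz' ▸ (hJ z').isRecord, ?_⟩, hjr ▸ hsp⟩
    rwa [hjr, ← hJz']
  · rintro ⟨r, ⟨hr, hne⟩, rfl⟩ δ hδ
    have hJz : J (s (j (r - 1))) = j (r - 1) := (hJ _).unique (hj (r - 1)).isRecord.isLeast
    have hsr : s r < s (j (r - 1)) := hr _ (by linarith [(hj (r - 1)).1])
    obtain ⟨z', hz'₁, hz'₂⟩ := exists_between (max_lt hsr (sub_lt_self _ hδ))
    have hJz' : J z' = r :=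
      (hJ z').unique ((hj (r - 1)).isLeast_of_pred (le_of_max_le_left hz'₁.le) hz'₂)
    exact ⟨z', ⟨lt_of_le_of_lt (le_max_right _ _) hz'₁, hz'₂⟩, by simpa [hJz', hJz] using hne⟩

theorem apply_pred_mem_Ioc_iff (hj : ∀ i, IsFirstArgminIic s i (j i))
    (hJ : ∀ y, IsLeast {q | s q ≤ y} (J y)) {y₁ y₂ : ℝ} {r : ℤ} :
    s (j (r - 1)) ∈ Set.Ioc y₁ y₂ ↔ r ∈ Ioc (J y₂) (J y₁) := by
  have hp := (hj (r - 1)).isRecord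
  rw [Set.mem_Ioc, mem_Ioc, ← not_le, hp.apply_le_iff (hJ y₁), hp.apply_le_iff (hJ y₂),
    (hj (r - 1)).le_iff (hJ y₁).isRecord, (hj (r - 1)).le_iff (hJ y₂).isRecord]
  omega

open Classical in
theorem ncard_isLeftJump_Ioc (hj : ∀ i, IsFirstArgminIic s i (j i))
    (hJ : ∀ y, IsLeast {q | s q ≤ y} (J y)) (a : ℤ → β) (y₁ y₂ : ℝ) :
    Nat.card {z | z ∈ Set.Ioc y₁ y₂ ∧ IsLeftJump (a ∘ J) z} =
      #{r ∈ Ioc (J y₂) (J y₁) | IsSwitchRecord s j a r} := by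
  have hset : {z | z ∈ Set.Ioc y₁ y₂ ∧ IsLeftJump (a ∘ J) z} =
      ({r ∈ Ioc (J y₂) (J y₁) | IsSwitchRecord s j a r}.image fun r => s (j (r - 1)) :) := by
    ext z
    simp only [Set.mem_ofPred_eq, isLeftJump_comp_iff hj hJ, coe_image, coe_filter,
      Set.mem_image]
    constructor
    · rintro ⟨hz, r, hr, rfl⟩
      exact ⟨r, ⟨(apply_pred_mem_Ioc_iff hj hJ).1 hz, hr⟩, rfl⟩
    · rintro ⟨r, ⟨hrI, hr⟩, rfl⟩
      exact ⟨(apply_pred_mem_Ioc_iff hj hJ).2 hrI, r, hr, rfl⟩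
  rw [hset, Nat.card_coe_set_eq, Set.ncard_coe_finset]
  exact card_image_of_injOn fun r hr r' hr' =>
    injOn_apply_pred hj (mem_filter.1 hr).2.1 (mem_filter.1 hr').2.1

end LeftJumps

theorem stmt11_general (k n : ℕ) (hk : 0 < k) (L : ℝ)
    (s : ℤ → ℝ) (hs : ∀ i : ℤ, s (i + k) = s i - L)
    (a : ℤ → Fin n) (ha : ∀ i : ℤ, a (i + k) = a i)
    (j : ℤ → ℤ)
    (hj : ∀ i : ℤ, j i ≤ i ∧ (∀ q ≤ i, s (j i) ≤ s q) ∧ (∀ q ≤ i, s q ≤ s (j i) → j i ≤ q))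
    (J : ℝ → ℤ)
    (hJ : ∀ y : ℝ, s (J y) ≤ y ∧ ∀ q : ℤ, s q ≤ y → J y ≤ q)
    (c : ℤ → Fin n) (hc : ∀ i, c i = a (j i))
    (f : ℝ → Fin n) (hf : ∀ y, f y = a (J y)) :
    (∀ i : ℤ, c (i + k) = c i) ∧ (∀ y : ℝ, f (y + L) = f y) ∧
    (∀ (i : ℤ) (y : ℝ),
      ((Finset.Ico i (i + k)).filter (fun m => c m ≠ c (m + 1))).card =
        Nat.card {z : ℝ | z ∈ Set.Ioc y (y + L) ∧
          ∀ δ > (0 : ℝ), ∃ z' ∈ Set.Ioo (z - δ) z, f z' ≠ f z}) := by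
  classical
  replace hj : ∀ i, IsFirstArgminIic s i (j i) := hj
  replace hJ : ∀ y, IsLeast {q | s q ≤ y} (J y) := hJ
  obtain rfl : c = a ∘ j := funext hc
  obtain rfl : f = a ∘ J := funext hf
  have hJL := isLeast_apply_add hs hJ
  refine ⟨fun i => by simp [isFirstArgminIic_apply_add hs hj, ha],
    fun y => by rw [comp_apply, hJL, ← ha, sub_add_cancel, comp_apply], fun i y => ?_⟩
  have hwindow : J (y + L) + k = J y := by rw [hJL, sub_add_cancel]
  calc #{m ∈ Ico i (i + k) | a (j m) ≠ a (j (m + 1))}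
      = #{r ∈ Ioc i (i + k) | IsSwitchRecord s j a r} := card_filter_ne_succ_eq hj a _ _
    _ = #{r ∈ Ioc (J (y + L)) (J y) | IsSwitchRecord s j a r} := by
        rw [← hwindow]
        exact (isSwitchRecord_periodic hs hj ha).card_filter_Ioc_eq (by exact_mod_cast hk) _ _
    _ = _ := (ncard_isLeftJump_Ioc hj hJ a y (y + L)).symm

/-- Let `s : ℤ → ℝ` satisfy `s (i+k) = s i − L` and let `a : ℤ → Fin n` be `k`-periodic.
Let `j i` be the minimal index minimizing `s` over `{q : q ≤ i}` and set `c i = a (j i)`;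
let `J y` be the minimal index with `s (J y) ≤ y` and set `f y = a (J y)`.
Then `c` is `k`-periodic, `f` is `L`-periodic, and for any `i : ℤ` and `y : ℝ`, the
number of value changes of the sequence `c i, c (i+1), …, c (i+k)` equals the number
of value changes of `f` on the interval `[y, y+L]` (counted as the points of `(y, y+L]`
at which `f` is not locally constant on the left). -/
theorem stmt11 (k n : ℕ) (hk : 0 < k) (L : ℝ) (hL : 0 < L)
    (s : ℤ → ℝ) (hs : ∀ i : ℤ, s (i + k) = s i - L)
    (a : ℤ → Fin n) (ha : ∀ i : ℤ, a (i + k) = a i)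
    (j : ℤ → ℤ)
    (hj : ∀ i : ℤ, j i ≤ i ∧ (∀ q ≤ i, s (j i) ≤ s q) ∧ (∀ q ≤ i, s q ≤ s (j i) → j i ≤ q))
    (J : ℝ → ℤ)
    (hJ : ∀ y : ℝ, s (J y) ≤ y ∧ ∀ q : ℤ, s q ≤ y → J y ≤ q)
    (c : ℤ → Fin n) (hc : ∀ i, c i = a (j i))
    (f : ℝ → Fin n) (hf : ∀ y, f y = a (J y)) :
    (∀ i : ℤ, c (i + k) = c i) ∧ (∀ y : ℝ, f (y + L) = f y) ∧
    (∀ (i : ℤ) (y : ℝ),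
      ((Finset.Ico i (i + k)).filter (fun m => c m ≠ c (m + 1))).card =
        Nat.card {z : ℝ | z ∈ Set.Ioc y (y + L) ∧
          ∀ δ > (0 : ℝ), ∃ z' ∈ Set.Ioo (z - δ) z, f z' ≠ f z}) :=
  stmt11_general k n hk L s hs a ha j hj J hJ c hc f hf
end

section
/- Let x₀,…,x_{n−1} be independent exponential random variables with rate β, let t : ℤ → ℝ satisfy t_{i+k} = t_i − L, let a : ℤ → Fin n be k-periodic, and set s_i = t_i − x_{a_i}. Define f(y) = a_j where j is the minimal index with s_j ≤ y. Then for every y ∈ ℝ and ε > 0, the probability that f is not constant on [y, y+ε] is at most O(βε). -/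
/-!
Fix `i` and `q`, and consider the event that `q` is the least index `p` with `a p ≠ i` and
`s p ≤ y + ε`. It depends only on the clocks `x j`, `j ≠ i`, so it is independent of `x i`.
On it, `f (y + ε) = i` exactly when `x i` lies in an upper set `A`, and if moreover `f` is not
constant on `[y, y + ε]` then `x i - ε ∉ A`. The exponential density satisfies
`p (u + ε) ≥ e^{-βε} p u`, so the law of `x i` gives `A \ (A + ε)` at most `1 - e^{-βε}` times
the mass of `A`. The events `{q is least} ∩ {x i ∈ A}` over all pairs `(i, q)` are disjoint,
so summing gives the bound `1 - e^{-βε} ≤ βε`.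
-/

open MeasureTheory ProbabilityTheory Set
open Real (exp)

lemma ofReal_exp_mul_exponentialPDF_le (β : ℝ) {ε : ℝ} (hε : 0 ≤ ε) (v : ℝ) :
    ENNReal.ofReal (exp (-(β * ε))) * exponentialPDF β v ≤ exponentialPDF β (v + ε) := by
  rcases lt_or_ge v 0 with hv | hv
  · simp [exponentialPDF_of_neg hv]
  · rw [exponentialPDF_of_nonneg hv, exponentialPDF_of_nonneg (by linarith),
      ← ENNReal.ofReal_mul (Real.exp_pos _).le]
    refine le_of_eq (congrArg ENNReal.ofReal ?_)
    rw [mul_left_comm, ← Real.exp_add]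
    congr 2
    ring

lemma ofReal_exp_mul_expMeasure_le (β : ℝ) {ε : ℝ} (hε : 0 ≤ ε) {A : Set ℝ}
    (hA : MeasurableSet A) :
    ENNReal.ofReal (exp (-(β * ε))) * expMeasure β A ≤ expMeasure β ((· - ε) ⁻¹' A) := by
  have hdens : expMeasure β = volume.withDensity (exponentialPDF β) := rfl
  rw [hdens, withDensity_apply _ hA, withDensity_apply _ (hA.preimage (measurable_sub_const ε)),
    ← lintegral_const_mul' _ _ ENNReal.ofReal_ne_top, ← lintegral_indicator hA,
    ← lintegral_indicator (hA.preimage (measurable_sub_const ε))]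
  calc ∫⁻ v, A.indicator (fun v => ENNReal.ofReal (exp (-(β * ε))) * exponentialPDF β v) v
      ≤ ∫⁻ v, A.indicator (fun v => exponentialPDF β (v + ε)) v :=
        lintegral_mono fun v => indicator_le_indicator (ofReal_exp_mul_exponentialPDF_le β hε v)
    _ = ∫⁻ u, A.indicator (fun v => exponentialPDF β (v + ε)) (u - ε) :=
        (lintegral_sub_right_eq_self _ ε).symm
    _ = ∫⁻ u, ((· - ε) ⁻¹' A).indicator (exponentialPDF β) u := by
        congr 1 with u
        simp only [indicator, sub_add_cancel]
        rfl

lemma expMeasure_diff_preimage_sub_le {β ε : ℝ} (hβ : 0 < β) (hε : 0 ≤ ε) {A : Set ℝ}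
    (hA : IsUpperSet A) :
    expMeasure β (A \ (· - ε) ⁻¹' A) ≤
      ENNReal.ofReal (1 - exp (-(β * ε))) * expMeasure β A := by
  have := isProbabilityMeasure_expMeasure hβ
  have hAm : MeasurableSet A := hA.ordConnected.measurableSet
  have hsub : (· - ε) ⁻¹' A ⊆ A := fun u hu => hA (sub_le_self u hε) hu
  rw [measure_sdiff hsub (hAm.preimage (measurable_sub_const ε)).nullMeasurableSet
      (measure_ne_top _ _), ENNReal.ofReal_sub _ (Real.exp_pos _).le, ENNReal.ofReal_one,
    ENNReal.sub_mul fun _ _ => measure_ne_top _ _, one_mul]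
  exact tsub_le_tsub_left (ofReal_exp_mul_expMeasure_le β hε hAm) _

lemma measure_inter_diff_preimage_sub_le {Ω : Type*} {m : MeasurableSpace Ω}
    [MeasurableSpace Ω] {P : Measure Ω} {X : Ω → ℝ} (hX : Measurable X)
    (hind : Indep m (MeasurableSpace.comap X inferInstance) P) {β ε : ℝ}
    (hlaw : P.map X = expMeasure β) (hβ : 0 < β) (hε : 0 ≤ ε) {B : Set Ω}
    (hB : MeasurableSet[m] B) {A : Set ℝ} (hA : IsUpperSet A) :
    P (B ∩ X ⁻¹' (A \ (· - ε) ⁻¹' A)) ≤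
      ENNReal.ofReal (1 - exp (-(β * ε))) * P (B ∩ X ⁻¹' A) := by
  have hAm : MeasurableSet A := hA.ordConnected.measurableSet
  have hdiff : MeasurableSet (A \ (· - ε) ⁻¹' A) :=
    hAm.diff (hAm.preimage (measurable_sub_const ε))
  rw [(Indep_iff _ _ _).1 hind _ _ hB ⟨_, hdiff, rfl⟩,
    (Indep_iff _ _ _).1 hind _ _ hB ⟨_, hAm, rfl⟩,
    ← Measure.map_apply hX hdiff, ← Measure.map_apply hX hAm, hlaw, mul_left_comm]
  gcongr
  exact expMeasure_diff_preimage_sub_le hβ hε hA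

lemma ProbabilityTheory.iIndepFun.indep_iSup_comap_compl {Ω ι : Type*} [MeasurableSpace Ω]
    {P : Measure Ω} {κ : ι → Type*} [∀ i, MeasurableSpace (κ i)] {x : ∀ i, Ω → κ i}
    (hmeas : ∀ i, Measurable (x i)) (hind : iIndepFun x P) (i : ι) :
    Indep (⨆ j ∈ ({i}ᶜ : Set ι), MeasurableSpace.comap (x j) inferInstance)
      (MeasurableSpace.comap (x i) inferInstance) P := by
  simpa using indep_iSup_of_disjoint (fun j => (hmeas j).comap_le) hind.iIndep
    (disjoint_compl_left : Disjoint ({i}ᶜ : Set ι) {i})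

section Deterministic

variable {ι : Type*} {t : ℤ → ℝ} {a : ℤ → ι}

/-- With `s p = t p - u` for the indices `p` of type `i`, the values `u` of the `i`-th clock for
which some such `p < q` satisfies `s p ≤ y`. -/
def hitBefore (t : ℤ → ℝ) (a : ℤ → ι) (i : ι) (q : ℤ) (y : ℝ) : Set ℝ :=
  {u | ∃ p < q, a p = i ∧ t p - u ≤ y}

lemma isUpperSet_hitBefore (i : ι) (q : ℤ) (y : ℝ) : IsUpperSet (hitBefore t a i q y) :=
  fun _ _ huv ⟨p, hpq, hap, hp⟩ => ⟨p, hpq, hap, by linarith⟩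

lemma preimage_sub_hitBefore (i : ι) (q : ℤ) (y ε : ℝ) :
    (· - ε) ⁻¹' hitBefore t a i q (y + ε) = hitBefore t a i q y := by
  ext u
  simp only [hitBefore, mem_preimage, mem_ofPred_eq]
  refine exists_congr fun p => and_congr_right fun _ => and_congr_right fun _ => ?_
  constructor <;> intro <;> linarith

variable {v : ι → ℝ} {s : ℤ → ℝ} {j : ℝ → ℤ}

lemma exists_isLeast_ne_mem_hitBefore_diff (hs : ∀ p, s p = t p - v (a p))
    (hj : ∀ z, IsLeast {p | s p ≤ z} (j z)) {y ε : ℝ}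
    (hchange : ∃ z ∈ Icc y (y + ε), a (j z) ≠ a (j y)) :
    ∃ q, IsLeast {p | a p ≠ a (j (y + ε)) ∧ s p ≤ y + ε} q ∧
      v (a (j (y + ε))) ∈ hitBefore t a (a (j (y + ε))) q (y + ε) \
        hitBefore t a (a (j (y + ε))) q y := by
  obtain ⟨z, hz, hne⟩ : ∃ z ∈ Icc y (y + ε), a (j z) ≠ a (j (y + ε)) := by
    obtain ⟨z, hz, hne⟩ := hchange
    by_cases hy : a (j y) = a (j (y + ε))
    · exact ⟨z, hz, hy ▸ hne⟩
    · exact ⟨y, left_mem_Icc.2 (hz.1.trans hz.2), hy⟩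
  set jy := j (y + ε)
  obtain ⟨q, ⟨hqa, hqs⟩, hqle⟩ := Int.exists_least_of_bdd
    (P := fun p => a p ≠ a jy ∧ s p ≤ y + ε) ⟨jy, fun p hp => (hj _).2 hp.2⟩
    ⟨j z, hne, (hj z).1.trans hz.2⟩
  have hjyq : jy < q := lt_of_le_of_ne ((hj _).2 hqs) fun h => hqa (h ▸ rfl)
  have hqjz : q ≤ j z := hqle _ ⟨hne, (hj z).1.trans hz.2⟩
  refine ⟨q, ⟨⟨hqa, hqs⟩, fun p hp => hqle p hp⟩, ⟨jy, hjyq, rfl, ?_⟩, ?_⟩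
  · rw [← hs]
    exact (hj _).1
  · rintro ⟨p, hpq, hap, hp⟩
    have hsp : s p ≤ z := by rw [hs, hap]; linarith [hz.1]
    exact absurd ((hj z).2 hsp) (not_le.2 (hpq.trans_le hqjz))

lemma eq_of_isLeast_ne_of_mem_hitBefore (hs : ∀ p, s p = t p - v (a p)) {y : ℝ} {jy q : ℤ}
    {i : ι} (hjy : IsLeast {p | s p ≤ y} jy) (hq : IsLeast {p | a p ≠ i ∧ s p ≤ y} q)
    (hv : v i ∈ hitBefore t a i q y) : a jy = i := by
  obtain ⟨p, hpq, hap, hp⟩ := hv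
  have hjyp : jy ≤ p := hjy.2 (by rw [mem_ofPred_eq, hs, hap]; exact hp)
  by_contra hne
  exact absurd (hq.2 ⟨hne, hjy.1⟩) (not_le.2 (hjyp.trans_lt hpq))

end Deterministic

section Events

variable {Ω ι : Type*} {t : ℤ → ℝ} {a : ℤ → ι} {x : ι → Ω → ℝ} {s : ℤ → Ω → ℝ}

def firstOtherHit (a : ℤ → ι) (s : ℤ → Ω → ℝ) (i : ι) (y : ℝ) (q : ℤ) : Set Ω :=
  {ω | IsLeast {p | a p ≠ i ∧ s p ω ≤ y} q}

lemma measurableSet_firstOtherHit (hs : ∀ p ω, s p ω = t p - x (a p) ω) (i : ι) (y : ℝ)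
    (q : ℤ) :
    MeasurableSet[⨆ j ∈ ({i}ᶜ : Set ι), MeasurableSpace.comap (x j) inferInstance]
      (firstOtherHit a s i y q) := by
  have hp (p : ℤ) : MeasurableSet[⨆ j ∈ ({i}ᶜ : Set ι), MeasurableSpace.comap (x j) inferInstance]
      {ω | a p ≠ i ∧ s p ω ≤ y} := by
    by_cases hap : a p = i
    · simp [hap]
    · refine le_iSup₂ (f := fun j (_ : j ∈ ({i}ᶜ : Set ι)) =>
        MeasurableSpace.comap (x j) inferInstance) (a p) hap _
        ⟨Ici (t p - y), measurableSet_Ici, ?_⟩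
      ext ω
      simp only [hap, hs, ne_eq, not_false_eq_true, true_and, mem_ofPred_eq, mem_preimage, mem_Ici]
      constructor <;> intro <;> linarith
  have hset : firstOtherHit a s i y q =
      {ω | a q ≠ i ∧ s q ω ≤ y} ∩ ⋂ p, {ω | a p ≠ i ∧ s p ω ≤ y → q ≤ p} := by
    ext ω
    simp only [mem_inter_iff, mem_iInter]
    rfl
  rw [hset]
  exact (hp q).inter (.iInter fun p => (hp p).imp (.const _))

variable {J : ℝ → Ω → ℤ} (hs : ∀ p ω, s p ω = t p - x (a p) ω)
  (hJ : ∀ z ω, IsLeast {p | s p ω ≤ z} (J z ω))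
include hs hJ

lemma setOf_exists_ne_subset_iUnion (y ε : ℝ) :
    {ω | ∃ z ∈ Icc y (y + ε), a (J z ω) ≠ a (J y ω)} ⊆
      ⋃ iq : ι × ℤ, firstOtherHit a s iq.1 (y + ε) iq.2 ∩
        x iq.1 ⁻¹' (hitBefore t a iq.1 iq.2 (y + ε) \ hitBefore t a iq.1 iq.2 y) := by
  intro ω hω
  obtain ⟨q, hq, hv⟩ :=
    exists_isLeast_ne_mem_hitBefore_diff (v := (x · ω)) (hs · ω) (hJ · ω) hω
  exact mem_iUnion.2 ⟨(a (J (y + ε) ω), q), hq, hv⟩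

lemma pairwise_disjoint_firstOtherHit_inter_hitBefore (y : ℝ) :
    Pairwise (Function.onFun Disjoint fun iq : ι × ℤ =>
      firstOtherHit a s iq.1 y iq.2 ∩ x iq.1 ⁻¹' hitBefore t a iq.1 iq.2 y) := by
  rintro ⟨i, q⟩ ⟨i', q'⟩ hne
  refine disjoint_left.2 fun ω ⟨hq, hv⟩ ⟨hq', hv'⟩ => hne ?_
  obtain rfl : i = i' :=
    (eq_of_isLeast_ne_of_mem_hitBefore (v := (x · ω)) (hs · ω) (hJ y ω) hq hv).symm.trans
      (eq_of_isLeast_ne_of_mem_hitBefore (v := (x · ω)) (hs · ω) (hJ y ω) hq' hv')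
  exact Prod.ext rfl (hq.unique hq')

end Events

theorem stmt12_general {Ω : Type*} [MeasurableSpace Ω] (P : Measure Ω) [IsProbabilityMeasure P]
    (n : ℕ) (β : ℝ) (hβ : 0 < β)
    (x : Fin n → Ω → ℝ) (hmeas : ∀ i, Measurable (x i))
    (hindep : iIndepFun x P)
    (hexp : ∀ i, Measure.map (x i) P = expMeasure β)
    (t : ℤ → ℝ)
    (a : ℤ → Fin n)
    (s : ℤ → Ω → ℝ) (hsdef : ∀ i ω, s i ω = t i - x (a i) ω)
    (J : ℝ → Ω → ℤ)
    (hJ : ∀ y ω, s (J y ω) ω ≤ y ∧ ∀ q : ℤ, s q ω ≤ y → J y ω ≤ q)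
    (f : ℝ → Ω → Fin n) (hf : ∀ y ω, f y ω = a (J y ω)) :
    ∀ (y ε : ℝ), 0 < ε →
      P {ω | ∃ z ∈ Set.Icc y (y + ε), f z ω ≠ f y ω} ≤ ENNReal.ofReal (β * ε) := by
  intro y ε hε
  set c := ENNReal.ofReal (1 - exp (-(β * ε)))
  let G (iq : Fin n × ℤ) : Set Ω :=
    firstOtherHit a s iq.1 (y + ε) iq.2 ∩ x iq.1 ⁻¹' hitBefore t a iq.1 iq.2 (y + ε)
  have hGmeas (iq : Fin n × ℤ) : MeasurableSet (G iq) :=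
    (iSup₂_le (fun j _ => (hmeas j).comap_le) _ (measurableSet_firstOtherHit hsdef _ _ _)).inter
      (hmeas _ (isUpperSet_hitBefore _ _ _).ordConnected.measurableSet)
  calc P {ω | ∃ z ∈ Icc y (y + ε), f z ω ≠ f y ω}
      ≤ ∑' iq, P (firstOtherHit a s iq.1 (y + ε) iq.2 ∩
          x iq.1 ⁻¹' (hitBefore t a iq.1 iq.2 (y + ε) \ hitBefore t a iq.1 iq.2 y)) := by
        simp only [hf]
        exact (measure_mono (setOf_exists_ne_subset_iUnion hsdef hJ y ε)).trans
          (measure_iUnion_le _)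
    _ ≤ ∑' iq, c * P (G iq) := ENNReal.tsum_le_tsum fun iq => by
        simpa only [preimage_sub_hitBefore] using measure_inter_diff_preimage_sub_le (hmeas _)
          (hindep.indep_iSup_comap_compl hmeas _) (hexp _) hβ hε.le
          (measurableSet_firstOtherHit hsdef _ _ _) (isUpperSet_hitBefore _ _ (y + ε))
    _ = c * P (⋃ iq, G iq) := by
        rw [ENNReal.tsum_mul_left,
          measure_iUnion (pairwise_disjoint_firstOtherHit_inter_hitBefore hsdef hJ _) hGmeas]
    _ ≤ ENNReal.ofReal (β * ε) := by
        refine (mul_le_of_le_one_right' prob_le_one).trans (ENNReal.ofReal_le_ofReal ?_)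
        linarith [Real.add_one_le_exp (-(β * ε))]

/-- Let `x₀, …, x_{n−1}` be independent `Exp(β)` random variables, `t : ℤ → ℝ` with
`t (i+k) = t i − L`, `a : ℤ → Fin n` `k`-periodic, and `s i = t i − x (a i)`.  Let
`f y = a (J y)` where `J y` is the minimal index with `s (J y) ≤ y`.  Then for every
`y` and `ε > 0`, the probability that `f` is not constant on `[y, y+ε]` is at most
`β ε` (a concrete form of the `O(βε)` bound). -/
theorem stmt12 {Ω : Type*} [MeasurableSpace Ω] (P : Measure Ω) [IsProbabilityMeasure P]
    (n k : ℕ) [NeZero n] (hk : 0 < k) (β : ℝ) (hβ : 0 < β) (L : ℝ) (hL : 0 < L)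
    (x : Fin n → Ω → ℝ) (hmeas : ∀ i, Measurable (x i))
    (hindep : iIndepFun x P)
    (hexp : ∀ i, Measure.map (x i) P = expMeasure β)
    (t : ℤ → ℝ) (ht : ∀ i : ℤ, t (i + k) = t i - L)
    (a : ℤ → Fin n) (ha : ∀ i : ℤ, a (i + k) = a i)
    (s : ℤ → Ω → ℝ) (hsdef : ∀ i ω, s i ω = t i - x (a i) ω)
    (J : ℝ → Ω → ℤ)
    (hJ : ∀ y ω, s (J y ω) ω ≤ y ∧ ∀ q : ℤ, s q ω ≤ y → J y ω ≤ q)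
    (f : ℝ → Ω → Fin n) (hf : ∀ y ω, f y ω = a (J y ω)) :
    ∀ (y ε : ℝ), 0 < ε →
      P {ω | ∃ z ∈ Set.Icc y (y + ε), f z ω ≠ f y ω} ≤ ENNReal.ofReal (β * ε) :=
  stmt12_general P n β hβ x hmeas hindep hexp t a s hsdef J hJ f hf
end

section
/- (Non-Euclidean composite gradient descent, progress lemma) Let f = g + ψ : ℝⁿ → ℝ ∪ {∞} be convex with g convex and L-smooth with respect to a norm ‖·‖. Given x_k, define x_{k+1} = argmin_x ( ⟨∇g(x_k), x⟩ + (L/2)‖x − x_k‖² + ψ(x) ). Then for every minimizer x* of f: f(x_{k+1}) ≤ f(x_k) − min( (f(x_k) − f(x*))² / (2L‖x_k − x*‖²), (f(x_k) − f(x*))/2 ). -/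
/-!
Compare the composite step with every point `y`. The descent lemma at `xₖ`, the minimality of
`xₖ₊₁` for the model, and the tangent bound `g xₖ + ⟨∇g xₖ, y - xₖ⟩ ≤ g y` give
`f xₖ₊₁ ≤ f y + (L/2)‖y - xₖ‖²`. The tangent bound needs no differentiability: a convex function
lying below the quadratic model along the line through `xₖ` and `y` must lie above its linear
part. Taking `y = τ x* + (1 - τ) xₖ` and using convexity of `f` gives
`f xₖ₊₁ ≤ fₖ - τΔ + (L/2)τ²‖xₖ - x*‖²` with `Δ = fₖ - f*`, and `τ = min 1 (Δ / (L‖xₖ - x*‖²))`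
yields the claimed decrease.
-/

variable {E : Type*} [AddCommGroup E] [Module ℝ E]

theorem ConvexOn.add_le_of_quadratic_bound {g : E → ℝ} (hg : ConvexOn ℝ Set.univ g) {p q : E}
    {D C : ℝ} (h : ∀ s : ℝ, 0 < s → g (q + s • (q - p)) ≤ g q - s * D + C * s ^ 2) :
    g q + D ≤ g p := by
  have key : ∀ s : ℝ, 0 < s → g q + D ≤ g p + C * s := by
    intro s hs
    set r := q + s • (q - p)
    have h1s : 0 < 1 + s := by linarith
    have hq : (1 / (1 + s)) • r + (s / (1 + s)) • p = q := by
      match_scalars <;> field_simp; ring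
    have hconv : g q ≤ (1 / (1 + s)) * g r + (s / (1 + s)) * g p := by
      simpa only [hq, smul_eq_mul] using
        hg.2 (Set.mem_univ r) (Set.mem_univ p) (show 0 ≤ 1 / (1 + s) by positivity)
          (show 0 ≤ s / (1 + s) by positivity) (by field_simp)
    have hconv' : (1 + s) * g q ≤ g r + s * g p := by
      rwa [div_mul_eq_mul_div, div_mul_eq_mul_div, ← add_div, le_div_iff₀ h1s, one_mul,
        mul_comm] at hconv
    have : s * (g q + D) ≤ s * (g p + C * s) := by nlinarith [h s hs]
    exact le_of_mul_le_mul_left this hs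
  refine le_of_forall_pos_le_add fun ε hε => ?_
  have hs : 0 < ε / (|C| + 1) := by positivity
  have : C * (ε / (|C| + 1)) ≤ ε := by
    rw [mul_div_assoc', div_le_iff₀ (by positivity)]
    nlinarith [le_abs_self C]
  linarith [key _ hs]

theorem ConvexOn.add_map_sub_le_of_le_add_sq {g : E → ℝ} (hg : ConvexOn ℝ Set.univ g)
    (N : Seminorm ℝ E) (ℓ : E →ₗ[ℝ] ℝ) {q : E} {C : ℝ}
    (h : ∀ p, g p ≤ g q + ℓ (p - q) + C * N (p - q) ^ 2) (p : E) :
    g q + ℓ (p - q) ≤ g p := by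
  refine hg.add_le_of_quadratic_bound (C := C * N (q - p) ^ 2) fun s hs => ?_
  have hsub : q + s • (q - p) - q = -s • (p - q) := by module
  have := h (q + s • (q - p))
  rw [hsub, map_smul, map_smul_eq_mul, Real.norm_eq_abs, abs_neg, abs_of_pos hs,
    smul_eq_mul] at this
  have hsym : N (p - q) = N (q - p) := by rw [← map_neg_eq_map, neg_sub]
  rw [hsym] at this
  linarith

theorem composite_step_le {N : Seminorm ℝ E} {L : ℝ} {g : E → ℝ} {Dg : E → E →ₗ[ℝ] ℝ}
    {ψ : E → EReal} (hg : ConvexOn ℝ Set.univ g)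
    (hsmooth : ∀ p q, g p ≤ g q + Dg q (p - q) + L / 2 * N (p - q) ^ 2) {x x' : E}
    (hmin : ∀ p, ((Dg x x' + L / 2 * N (x' - x) ^ 2 : ℝ) : EReal) + ψ x' ≤
      ((Dg x p + L / 2 * N (p - x) ^ 2 : ℝ) : EReal) + ψ p) (y : E) :
    (g x' : EReal) + ψ x' ≤ (g y : EReal) + ψ y + ((L / 2 * N (y - x) ^ 2 : ℝ) : EReal) := by
  have hsx := hsmooth x' x
  have hgrad := hg.add_map_sub_le_of_le_add_sq N (Dg x) (hsmooth · x) y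
  rw [map_sub] at hsx hgrad
  calc (g x' : EReal) + ψ x'
      ≤ ((g x - Dg x x + (Dg x x' + L / 2 * N (x' - x) ^ 2) : ℝ) : EReal) + ψ x' := by
        gcongr; linarith
    _ = ((g x - Dg x x : ℝ) : EReal) +
          (((Dg x x' + L / 2 * N (x' - x) ^ 2 : ℝ) : EReal) + ψ x') := by
        rw [EReal.coe_add, add_assoc]
    _ ≤ ((g x - Dg x x : ℝ) : EReal) + (((Dg x y + L / 2 * N (y - x) ^ 2 : ℝ) : EReal) + ψ y) :=
        add_le_add_right (hmin y) _
    _ ≤ ((g y + L / 2 * N (y - x) ^ 2 : ℝ) : EReal) + ψ y := by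
        rw [← add_assoc, ← EReal.coe_add]
        exact add_le_add_left (EReal.coe_le_coe (by linarith)) _
    _ = (g y : EReal) + ψ y + ((L / 2 * N (y - x) ^ 2 : ℝ) : EReal) := by
        rw [EReal.coe_add, add_right_comm]

theorem exists_le_mul_sub_sq {L : ℝ} (hL : 0 < L) (Δ R : ℝ) :
    ∃ τ ∈ Set.Icc (0 : ℝ) 1,
      min (Δ ^ 2 / (2 * L * R ^ 2)) (Δ / 2) ≤ τ * Δ - L / 2 * τ ^ 2 * R ^ 2 := by
  rcases le_or_gt Δ 0 with hΔ | hΔ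
  · exact ⟨0, by simp, by simpa using (min_le_right _ _).trans (by linarith)⟩
  rcases eq_or_ne R 0 with rfl | hR
  · exact ⟨0, by simp, by simp⟩
  have hLR : 0 < L * R ^ 2 := by positivity
  rcases le_or_gt Δ (L * R ^ 2) with hle | hgt
  · refine ⟨Δ / (L * R ^ 2), ⟨by positivity, (div_le_one hLR).2 hle⟩, (min_le_left _ _).trans ?_⟩
    apply le_of_eq
    field_simp
    ring
  · exact ⟨1, by simp, (min_le_right _ _).trans (by nlinarith)⟩

open Finset

theorem stmt13_general {m : ℕ} (N : Seminorm ℝ (Fin m → ℝ))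
    (L : ℝ) (hL : 0 < L)
    (g : (Fin m → ℝ) → ℝ) (Dg : (Fin m → ℝ) → (Fin m → ℝ))
    (ψ : (Fin m → ℝ) → EReal)
    (f : (Fin m → ℝ) → EReal) (hfdef : ∀ p, f p = (g p : EReal) + ψ p)
    (hg_convex : ConvexOn ℝ Set.univ g)
    (hsmooth : ∀ p q, g p ≤ g q + (∑ i, Dg q i * (p i - q i)) + L / 2 * (N (p - q)) ^ 2)
    (hf_convex : ∀ p q, ∀ τ : ℝ, 0 ≤ τ → τ ≤ 1 →
      f (τ • p + (1 - τ) • q) ≤ ((τ : EReal) * f p + ((1 - τ : ℝ) : EReal) * f q))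
    (xk xnext : Fin m → ℝ)
    (hmin : ∀ p : Fin m → ℝ,
      (((∑ i, Dg xk i * xnext i) + L / 2 * (N (xnext - xk)) ^ 2 : ℝ) : EReal) + ψ xnext ≤
      (((∑ i, Dg xk i * p i) + L / 2 * (N (p - xk)) ^ 2 : ℝ) : EReal) + ψ p)
    (xstar : Fin m → ℝ)
    (fk fstar : ℝ) (hfk : f xk = (fk : EReal)) (hfstar : f xstar = (fstar : EReal)) :
    f xnext ≤
      ((fk - min ((fk - fstar) ^ 2 / (2 * L * (N (xk - xstar)) ^ 2))
          ((fk - fstar) / 2) : ℝ) : EReal) := by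
  obtain ⟨τ, ⟨hτ0, hτ1⟩, hgain⟩ := exists_le_mul_sub_sq hL (fk - fstar) (N (xk - xstar))
  set y := τ • xstar + (1 - τ) • xk
  have hNy : N (y - xk) = τ * N (xk - xstar) := by
    rw [show y - xk = -τ • (xk - xstar) by module, map_smul_eq_mul, Real.norm_eq_abs, abs_neg,
      abs_of_nonneg hτ0]
  have hfy : f y ≤ ((τ * fstar + (1 - τ) * fk : ℝ) : EReal) := by
    simpa only [hfstar, hfk, EReal.coe_add, EReal.coe_mul] using hf_convex xstar xk τ hτ0 hτ1
  have hstep : f xnext ≤ f y + ((L / 2 * N (y - xk) ^ 2 : ℝ) : EReal) := by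
    simpa only [hfdef] using composite_step_le (Dg := fun q => dotProductBilin ℝ ℝ (Dg q))
      hg_convex hsmooth hmin y
  refine hstep.trans ((add_le_add_left hfy _).trans ?_)
  rw [← EReal.coe_add, hNy]
  exact EReal.coe_le_coe (by linarith)

/-- (Non-Euclidean composite gradient descent, progress lemma.)
Let `f = g + ψ : ℝᵐ → ℝ ∪ {∞}` be convex, where `g : ℝᵐ → ℝ` is convex and `L`-smooth
with respect to an arbitrary norm `N` (in the descent-lemma form), with gradient `Dg`,
and `ψ : ℝᵐ → ℝ ∪ {∞}` is arbitrary.  Let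
`xnext = argmin_x ( ⟨Dg xk, x⟩ + (L/2)·N(x − xk)² + ψ x )`.
Then for every minimizer `xstar` of `f` (with `f xk = fk` and `f xstar = fstar` finite):
`f xnext ≤ fk − min( (fk − fstar)² / (2·L·N(xk − xstar)²), (fk − fstar)/2 )`. -/
theorem stmt13 {m : ℕ} (N : Seminorm ℝ (Fin m → ℝ)) (hN : ∀ p, N p = 0 → p = 0)
    (L : ℝ) (hL : 0 < L)
    (g : (Fin m → ℝ) → ℝ) (Dg : (Fin m → ℝ) → (Fin m → ℝ))
    (ψ : (Fin m → ℝ) → EReal) (hψ : ∀ p, ψ p ≠ ⊥)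
    (f : (Fin m → ℝ) → EReal) (hfdef : ∀ p, f p = (g p : EReal) + ψ p)
    (hg_convex : ConvexOn ℝ Set.univ g)
    (hsmooth : ∀ p q, g p ≤ g q + (∑ i, Dg q i * (p i - q i)) + L / 2 * (N (p - q)) ^ 2)
    (hf_convex : ∀ p q, ∀ τ : ℝ, 0 ≤ τ → τ ≤ 1 →
      f (τ • p + (1 - τ) • q) ≤ ((τ : EReal) * f p + ((1 - τ : ℝ) : EReal) * f q))
    (xk xnext : Fin m → ℝ)
    (hmin : ∀ p : Fin m → ℝ,
      (((∑ i, Dg xk i * xnext i) + L / 2 * (N (xnext - xk)) ^ 2 : ℝ) : EReal) + ψ xnext ≤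
      (((∑ i, Dg xk i * p i) + L / 2 * (N (p - xk)) ^ 2 : ℝ) : EReal) + ψ p)
    (xstar : Fin m → ℝ) (hstar : ∀ p, f xstar ≤ f p)
    (fk fstar : ℝ) (hfk : f xk = (fk : EReal)) (hfstar : f xstar = (fstar : EReal)) :
    f xnext ≤
      ((fk - min ((fk - fstar) ^ 2 / (2 * L * (N (xk - xstar)) ^ 2))
          ((fk - fstar) / 2) : ℝ) : EReal) :=
  stmt13_general N L hL g Dg ψ f hfdef hg_convex hsmooth hf_convex xk xnext hmin xstar fk fstar hfk
    hfstar
end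

section
/- If a two-way infinite sequence s satisfies s_{i+k} = s_i − L with L > 0 and the associated sequences c and function f are defined as above, then f cannot change values more than k times on any interval of length L. -/
/-!
A point `z` at which `f` is not locally constant on the left must be one of the values `s j`:
otherwise `J` is constant on `[s (J z), z]`. Such a `z ∈ (y, y + L]` has `J z < J y`, since
`s (J y) ≤ y < z`, and `J y ≤ J z + k`, since `s (J z + k) = z - L ≤ y`. Hence the change
points lie in the image under `s` of the `k` indices `J y - k, …, J y - 1`.
-/

def IsFirstIndexBelow (s : ℤ → ℝ) (J : ℝ → ℤ) : Prop :=
  ∀ y : ℝ, s (J y) ≤ y ∧ ∀ q : ℤ, s q ≤ y → J y ≤ q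

namespace IsFirstIndexBelow

variable {s : ℤ → ℝ} {J : ℝ → ℤ}

theorem antitone (hJ : IsFirstIndexBelow s J) : Antitone J :=
  fun _ v huv => (hJ v).2 _ ((hJ _).1.trans huv)

theorem apply_eq_of_mem_Icc (hJ : IsFirstIndexBelow s J) {z z' : ℝ}
    (hz' : z' ∈ Set.Icc (s (J z)) z) : J z' = J z :=
  le_antisymm ((hJ z').2 _ hz'.1) (hJ.antitone hz'.2)

theorem apply_apply_eq_of_forall_exists_ne (hJ : IsFirstIndexBelow s J) {z : ℝ}
    (hchange : ∀ δ > (0 : ℝ), ∃ z' ∈ Set.Ioo (z - δ) z, J z' ≠ J z) : s (J z) = z := by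
  refine (hJ z).1.eq_or_lt.resolve_right fun hlt => ?_
  obtain ⟨z', ⟨hz'_gt, hz'_lt⟩, hne⟩ := hchange (z - s (J z)) (sub_pos.2 hlt)
  exact hne (hJ.apply_eq_of_mem_Icc ⟨by linarith, hz'_lt.le⟩)

theorem apply_mem_Ico_of_apply_apply_eq (hJ : IsFirstIndexBelow s J) {k : ℕ} {L : ℝ}
    (hs : ∀ i : ℤ, s (i + k) ≤ s i - L) {y z : ℝ} (hz : z ∈ Set.Ioc y (y + L))
    (hsz : s (J z) = z) : J z ∈ Set.Ico (J y - k) (J y) := by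
  have hshift : J y ≤ J z + k := (hJ y).2 _ (by linarith [hs (J z), hz.2])
  have hlt : J z < J y := (hJ.antitone hz.1.le).lt_of_ne fun heq => by
    linarith [(hJ y).1, heq ▸ hsz, hz.1]
  exact ⟨by omega, hlt⟩

end IsFirstIndexBelow

theorem Set.ncard_le_of_subset_image_Ico {α : Type*} {S : Set α} {g : ℤ → α} {m : ℤ}
    {k : ℕ} (hS : S ⊆ g '' Set.Ico (m - k) m) : S.ncard ≤ k :=
  calc S.ncard ≤ (g '' Set.Ico (m - k) m).ncard :=
        Set.ncard_le_ncard hS ((Set.finite_Ico _ _).image g)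
    _ ≤ (Set.Ico (m - k) m).ncard := Set.ncard_image_le (Set.finite_Ico _ _)
    _ = k := by
      rw [Set.ncard_eq_toFinset_card', Set.toFinset_Ico, Int.card_Ico]
      omega

theorem stmt15_general (k n : ℕ) (L : ℝ)
    (s : ℤ → ℝ) (hs : ∀ i : ℤ, s (i + k) = s i - L)
    (a : ℤ → Fin n)
    (J : ℝ → ℤ)
    (hJ : ∀ y : ℝ, s (J y) ≤ y ∧ ∀ q : ℤ, s q ≤ y → J y ≤ q)
    (f : ℝ → Fin n) (hf : ∀ y, f y = a (J y)) :
    ∀ y : ℝ,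
      Nat.card {z : ℝ | z ∈ Set.Ioc y (y + L) ∧
        ∀ δ > (0 : ℝ), ∃ z' ∈ Set.Ioo (z - δ) z, f z' ≠ f z} ≤ k := by
  intro y
  have hJ : IsFirstIndexBelow s J := hJ
  rw [Nat.card_coe_set_eq]
  refine Set.ncard_le_of_subset_image_Ico (g := s) (m := J y) ?_
  rintro z ⟨hz, hchange⟩
  have hsz : s (J z) = z := hJ.apply_apply_eq_of_forall_exists_ne fun δ hδ => by
    obtain ⟨z', hz', hne⟩ := hchange δ hδ
    exact ⟨z', hz', fun heq => hne (by rw [hf, hf, heq])⟩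
  exact ⟨J z, hJ.apply_mem_Ico_of_apply_apply_eq (fun i => (hs i).le) hz hsz, hsz⟩

/-- If `s : ℤ → ℝ` satisfies `s (i+k) = s i − L` with `L > 0`, `a : ℤ → Fin n` is
`k`-periodic, and `f y = a (J y)` where `J y` is the minimal index with `s (J y) ≤ y`,
then `f` cannot change values more than `k` times on any interval of length `L`
(changes counted as the points of `(y, y+L]` at which `f` is not locally constant
on the left). -/
theorem stmt15 (k n : ℕ) (hk : 0 < k) (L : ℝ) (hL : 0 < L)
    (s : ℤ → ℝ) (hs : ∀ i : ℤ, s (i + k) = s i - L)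
    (a : ℤ → Fin n) (ha : ∀ i : ℤ, a (i + k) = a i)
    (J : ℝ → ℤ)
    (hJ : ∀ y : ℝ, s (J y) ≤ y ∧ ∀ q : ℤ, s q ≤ y → J y ≤ q)
    (f : ℝ → Fin n) (hf : ∀ y, f y = a (J y)) :
    ∀ y : ℝ,
      Nat.card {z : ℝ | z ∈ Set.Ioc y (y + L) ∧
        ∀ δ > (0 : ℝ), ∃ z' ∈ Set.Ioo (z - δ) z, f z' ≠ f z} ≤ k :=
  stmt15_general k n L s hs a J hJ f hf
end
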